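/- arXiv:1910.14081 — 9 statements merged into one kernel-verified Lean document; each statement's English description precedes it below -/
import Mathlib

section
/- Let G = ([n], E) be a fixed, undirected, connected graph on n vertices and let A = (a_ij) be an n×n real matrix such that a_ij > 0 whenever j = i or {i,j} ∈ E, a_ij = 0 otherwise, and ∑_{j=1}^n a_ij = 1 for every i. Then for every initial state x⁰ ∈ ℝⁿ, the averaging dynamics x^{k+1} = A x^k converge: the sequence {x^k} has a limit x* ∈ ℝⁿ satisfying A x* = x*, and moreover all coordinates of x* are equal (consensus). -/
open Filter Finset Topology

/-! A row-stochastic matrix averages, so the maximum of the state never increases and the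
minimum never decreases. Positive self-weights and connectivity make some power `A ^ p`
entrywise positive, with smallest entry `δ > 0`; since every coordinate of `A ^ p *ᵥ y` puts
weight at least `δ` on the minimum of `y`, one application of `A ^ p` shrinks the spread
`max - min` by the factor `1 - δ`. So maximum and minimum converge to a common value `c`, and the
constant vector `c` is fixed by `A` because the rows sum to one. -/

section Spread

variable {ι : Type*} [Finite ι] [Nonempty ι]

noncomputable def spread (y : ι → ℝ) : ℝ := (⨆ i, y i) - ⨅ i, y i

lemma spread_nonneg (y : ι → ℝ) : 0 ≤ spread y :=
  sub_nonneg.2 <| (ciInf_le (Finite.bddBelow_range y) (Classical.arbitrary ι)).trans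
    (le_ciSup (Finite.bddAbove_range y) _)

lemma exists_tendsto_const_of_tendsto_spread {x : ℕ → ι → ℝ}
    (hsup : Antitone fun k => ⨆ i, x k i) (hinf : Monotone fun k => ⨅ i, x k i)
    (hspread : Tendsto (fun k => spread (x k)) atTop (𝓝 0)) :
    ∃ c, Tendsto x atTop (𝓝 fun _ => c) := by
  have hbdd : BddBelow (Set.range fun k => ⨆ i, x k i) :=
    ⟨⨅ i, x 0 i, by
      rintro _ ⟨k, rfl⟩
      exact (hinf k.zero_le).trans (sub_nonneg.1 (spread_nonneg (x k)))⟩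
  have hsup_lim := tendsto_atTop_ciInf hsup hbdd
  have hinf_lim : Tendsto (fun k => ⨅ i, x k i) atTop (𝓝 (⨅ k, ⨆ i, x k i)) := by
    simpa [spread] using hsup_lim.sub hspread
  exact ⟨_, tendsto_pi_nhds.2 fun i =>
    tendsto_of_tendsto_of_tendsto_of_le_of_le hinf_lim hsup_lim
      (fun k => ciInf_le (Finite.bddBelow_range _) i)
      (fun k => le_ciSup (Finite.bddAbove_range _) i)⟩

end Spread

namespace Matrix

section Primitive

variable {ι R : Type*} [Fintype ι] [DecidableEq ι] [Ring R] [LinearOrder R]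
  [IsStrictOrderedRing R] {A : Matrix ι ι R}

lemma pow_apply_pos_of_le (hA : ∀ i j, 0 ≤ A i j) (hdiag : ∀ i, 0 < A i i) {i j : ι} {k l : ℕ}
    (hkl : k ≤ l) (hk : 0 < (A ^ k) i j) : 0 < (A ^ l) i j := by
  induction l, hkl using Nat.le_induction with
  | base => exact hk
  | succ l _ ih =>
    rw [pow_succ', mul_apply]
    exact sum_pos' (fun m _ => mul_nonneg (hA i m) (pow_apply_nonneg hA l m j))
      ⟨i, mem_univ i, mul_pos (hdiag i) ih⟩

lemma pow_length_apply_pos {G : SimpleGraph ι} (hA : ∀ i j, 0 ≤ A i j)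
    (hadj : ∀ i j, G.Adj i j → 0 < A i j) {i j : ι} (w : G.Walk i j) :
    0 < (A ^ w.length) i j := by
  induction w with
  | nil => simp
  | @cons i m j h w ih =>
    rw [SimpleGraph.Walk.length_cons, pow_succ', mul_apply]
    exact sum_pos' (fun l _ => mul_nonneg (hA i l) (pow_apply_nonneg hA _ l j))
      ⟨m, mem_univ m, mul_pos (hadj i m h) ih⟩

theorem isPrimitive_of_connected {G : SimpleGraph ι} (hG : G.Connected) (hA : ∀ i j, 0 ≤ A i j)
    (hdiag : ∀ i, 0 < A i i) (hadj : ∀ i j, G.Adj i j → 0 < A i j) : A.IsPrimitive := by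
  have := hG.nonempty
  refine ⟨hA, Fintype.card ι, Fintype.card_pos, fun i j => ?_⟩
  obtain ⟨w⟩ := hG.preconnected i j
  exact pow_apply_pos_of_le hA hdiag w.bypass_isPath.length_lt.le
    (pow_length_apply_pos hA hadj w.bypass)

end Primitive

section Stochastic

variable {ι : Type*} [Fintype ι] [DecidableEq ι] {P : Matrix ι ι ℝ}

lemma iInf_le_mulVec_apply (hP : P ∈ rowStochastic ℝ ι) (y : ι → ℝ) (i : ι) :
    ⨅ j, y j ≤ (P *ᵥ y) i :=
  calc ⨅ j, y j = ∑ j, P i j * ⨅ j, y j := by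
        rw [← sum_mul, sum_row_of_mem_rowStochastic hP, one_mul]
    _ ≤ ∑ j, P i j * y j := sum_le_sum fun j _ =>
        mul_le_mul_of_nonneg_left (ciInf_le (Finite.bddBelow_range y) j)
          (nonneg_of_mem_rowStochastic hP)

lemma mulVec_apply_le_iSup (hP : P ∈ rowStochastic ℝ ι) (y : ι → ℝ) (i : ι) :
    (P *ᵥ y) i ≤ ⨆ j, y j :=
  calc ∑ j, P i j * y j ≤ ∑ j, P i j * ⨆ j, y j := sum_le_sum fun j _ =>
        mul_le_mul_of_nonneg_left (le_ciSup (Finite.bddAbove_range y) j)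
          (nonneg_of_mem_rowStochastic hP)
    _ = ⨆ j, y j := by rw [← sum_mul, sum_row_of_mem_rowStochastic hP, one_mul]

lemma mulVec_const_of_mem_rowStochastic (hP : P ∈ rowStochastic ℝ ι) (c : ℝ) :
    P *ᵥ (fun _ => c) = fun _ => c := by
  ext i
  simp only [mulVec, dotProduct, ← sum_mul, sum_row_of_mem_rowStochastic hP, one_mul]

lemma mulVec_apply_le_iSup_sub [Nonempty ι] (hP : P ∈ rowStochastic ℝ ι) {δ : ℝ} {i : ι}
    (hδ : ∀ j, δ ≤ P i j) (y : ι → ℝ) :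
    (P *ᵥ y) i ≤ (⨆ j, y j) - δ * spread y := by
  set S := ⨆ j, y j
  obtain ⟨j₀, hj₀⟩ := exists_eq_ciInf_of_finite (f := y)
  have hgap : ∀ j, 0 ≤ P i j * (S - y j) := fun j =>
    mul_nonneg (nonneg_of_mem_rowStochastic hP)
      (sub_nonneg.2 (le_ciSup (Finite.bddAbove_range y) j))
  have hexpand : (P *ᵥ y) i = S - ∑ j, P i j * (S - y j) := by
    simp only [mulVec, dotProduct, mul_sub, sum_sub_distrib, ← sum_mul,
      sum_row_of_mem_rowStochastic hP, one_mul, sub_sub_cancel]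
  calc (P *ᵥ y) i = S - ∑ j, P i j * (S - y j) := hexpand
    _ ≤ S - P i j₀ * (S - y j₀) :=
        sub_le_sub_left (single_le_sum (fun j _ => hgap j) (mem_univ j₀)) S
    _ ≤ S - δ * spread y := by
        rw [hj₀]
        exact sub_le_sub_left (mul_le_mul_of_nonneg_right (hδ j₀) (spread_nonneg y)) S

lemma spread_mulVec_le [Nonempty ι] (hP : P ∈ rowStochastic ℝ ι) {δ : ℝ} (hδ : ∀ i j, δ ≤ P i j)
    (y : ι → ℝ) : spread (P *ᵥ y) ≤ (1 - δ) * spread y := by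
  have hsup : ⨆ i, (P *ᵥ y) i ≤ (⨆ j, y j) - δ * spread y :=
    ciSup_le fun i => mulVec_apply_le_iSup_sub hP (hδ i) y
  have hinf : ⨅ j, y j ≤ ⨅ i, (P *ᵥ y) i := le_ciInf (iInf_le_mulVec_apply hP y)
  unfold spread at hsup ⊢
  linarith

lemma spread_pow_mulVec_le [Nonempty ι] (hP : P ∈ rowStochastic ℝ ι) {δ : ℝ}
    (hδ : ∀ i j, δ ≤ P i j) (k : ℕ) (y : ι → ℝ) :
    spread ((P ^ k) *ᵥ y) ≤ (1 - δ) ^ k * spread y := by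
  have hδ₁ : 0 ≤ 1 - δ := by
    let i := Classical.arbitrary ι
    linarith [hδ i i, le_one_of_mem_rowStochastic hP (i := i) (j := i)]
  induction k with
  | zero => simp
  | succ k ih =>
    calc spread ((P ^ (k + 1)) *ᵥ y) = spread (P *ᵥ (P ^ k) *ᵥ y) := by
          rw [pow_succ', mulVec_mulVec]
      _ ≤ (1 - δ) * spread ((P ^ k) *ᵥ y) := spread_mulVec_le hP hδ _
      _ ≤ (1 - δ) * ((1 - δ) ^ k * spread y) := mul_le_mul_of_nonneg_left ih hδ₁
      _ = (1 - δ) ^ (k + 1) * spread y := by ring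

theorem exists_tendsto_const_of_isPrimitive [Nonempty ι] (hP : P ∈ rowStochastic ℝ ι)
    (hprim : P.IsPrimitive) {x : ℕ → ι → ℝ} (hx : ∀ k, x (k + 1) = P *ᵥ x k) :
    ∃ c, Tendsto x atTop (𝓝 fun _ => c) := by
  have hiter : ∀ k, x k = (P ^ k) *ᵥ x 0 := by
    intro k
    induction k with
    | zero => simp
    | succ k ih => rw [hx, ih, mulVec_mulVec, ← pow_succ']
  have hsup : Antitone fun k => ⨆ i, x k i := antitone_nat_of_succ_le fun k => by
    rw [hx]; exact ciSup_le (mulVec_apply_le_iSup hP (x k))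
  have hinf : Monotone fun k => ⨅ i, x k i := monotone_nat_of_le_succ fun k => by
    rw [hx]; exact le_ciInf (iInf_le_mulVec_apply hP (x k))
  obtain ⟨-, p, hp, hpos⟩ := hprim
  obtain ⟨⟨i₀, j₀⟩, hmin⟩ := Finite.exists_min fun ij : ι × ι => (P ^ p) ij.1 ij.2
  set δ := (P ^ p) i₀ j₀
  have hgeom : ∀ k, spread (x k) ≤ (1 - δ) ^ (k / p) * spread (x 0) := fun k =>
    calc spread (x k) ≤ spread (x (p * (k / p))) :=
          sub_le_sub (hsup (Nat.mul_div_le k p)) (hinf (Nat.mul_div_le k p))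
      _ ≤ (1 - δ) ^ (k / p) * spread (x 0) := by
          rw [hiter, pow_mul]
          exact spread_pow_mulVec_le (pow_mem hP p) (fun i j => hmin (i, j)) _ _
  refine exists_tendsto_const_of_tendsto_spread hsup hinf
    (squeeze_zero (fun k => spread_nonneg _) hgeom ?_)
  have hδ₀ : 0 < δ := hpos i₀ j₀
  have hδ₁ : δ ≤ 1 := le_one_of_mem_rowStochastic (pow_mem hP p)
  simpa using ((tendsto_pow_atTop_nhds_zero_of_lt_one (by linarith) (by linarith)).comp
    (Nat.tendsto_div_const_atTop hp.ne')).mul_const (spread (x 0))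

end Stochastic

end Matrix

open Matrix in
theorem fixed_graph_averaging_converges_to_consensus_general
    (n : ℕ) (G : SimpleGraph (Fin n)) (hG : G.Connected)
    (A : Matrix (Fin n) (Fin n) ℝ)
    (hpos : ∀ i j, (j = i ∨ G.Adj i j) → 0 < A i j)
    (hzero : ∀ i j, ¬(j = i ∨ G.Adj i j) → A i j = 0)
    (hrow : ∀ i, ∑ j, A i j = 1)
    (x : ℕ → Fin n → ℝ)
    (hdyn : ∀ k, x (k + 1) = A.mulVec (x k)) :
    ∃ xs : Fin n → ℝ, Tendsto x atTop (nhds xs) ∧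
      A.mulVec xs = xs ∧ ∀ i j, xs i = xs j := by
  have := hG.nonempty
  have hA : ∀ i j, 0 ≤ A i j := fun i j => by
    by_cases h : j = i ∨ G.Adj i j
    exacts [(hpos i j h).le, (hzero i j h).ge]
  have hstoch : A ∈ rowStochastic ℝ (Fin n) := mem_rowStochastic_iff_sum.2 ⟨hA, hrow⟩
  have hprim : A.IsPrimitive := isPrimitive_of_connected hG hA (fun i => hpos i i (Or.inl rfl))
    fun i j h => hpos i j (Or.inr h)
  obtain ⟨c, hc⟩ := exists_tendsto_const_of_isPrimitive hstoch hprim hdyn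
  refine ⟨fun _ => c, hc, ?_, fun _ _ => rfl⟩
  exact mulVec_const_of_mem_rowStochastic hstoch c

/-- fixed-network averaging dynamics over a connected undirected graph,
with positive weights on self-loops and edges, zero elsewhere, and unit row sums,
converge to a consensus fixed point. -/
theorem fixed_graph_averaging_converges_to_consensus
    (n : ℕ) (hn : 0 < n) (G : SimpleGraph (Fin n)) (hG : G.Connected)
    (A : Matrix (Fin n) (Fin n) ℝ)
    (hpos : ∀ i j, (j = i ∨ G.Adj i j) → 0 < A i j)
    (hzero : ∀ i j, ¬(j = i ∨ G.Adj i j) → A i j = 0)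
    (hrow : ∀ i, ∑ j, A i j = 1)
    (x : ℕ → Fin n → ℝ)
    (hdyn : ∀ k, x (k + 1) = A.mulVec (x k)) :
    ∃ xs : Fin n → ℝ, Tendsto x atTop (nhds xs) ∧
      A.mulVec xs = xs ∧ ∀ i j, xs i = xs j :=
  fixed_graph_averaging_converges_to_consensus_general n G hG A hpos hzero hrow x hdyn
end

section
/- Let {G_k = ([n], E_k)}_{k≥0} be a sequence of directed graphs with edge weights a_ij(k), let α ∈ (0,1), and let B be a positive integer. Assume: (i) a_ij(k) ∈ [α,1] ∪ {0} for all i,j,k; (ii) a_ii(k) ≥ α for all i,k; (iii) ∑_{j=1}^n a_ij(k) = 1 for all i,k; and (iv) the sequence is B-strongly connected, i.e., for every k ≥ 0 the graph ([n], ∪_{s=k}^{k+B} E_s) is strongly connected, where (i,j) ∈ E_s iff a_ij(s) > 0. Then for every initial state x⁰ ∈ ℝⁿ, the averaging dynamics x_i^{k+1} = ∑_{j=1}^n a_ij(k) x_j^k converge to a consensus point: there exists c ∈ ℝ such that lim_{k→∞} x_i^k = c for every i ∈ [n]. -/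
/-!
The maximum of the states never increases and the minimum never decreases. Fix a time `k`, let
`M` be the maximum and `δ` the spread `max - min` at time `k`, and call an agent lagging at time
`k + t` if its state is at most `M - αᵗ δ`. An agent with a weight `≥ α` on a lagging agent lags at
the next step, so self-weights keep lagging agents lagging, and `B`-strong connectivity provides,
in every window of `B + 1` steps, an edge from a non-lagging agent into the lagging set. Starting
from the agent of minimal state, after `T = (B + 1)(n - 1)` steps every agent lags, so the spread
contracts by the factor `1 - αᵀ` every `T` steps and tends to `0`, squeezing all states to a
common limit.
-/

open Filter Finset

theorem Relation.ReflTransGen.exists_rel_of_notMem_of_mem {γ : Type*} {r : γ → γ → Prop}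
    {T : Set γ} {i j : γ} (h : Relation.ReflTransGen r i j) (hi : i ∉ T) (hj : j ∈ T) :
    ∃ u v, r u v ∧ u ∉ T ∧ v ∈ T := by
  induction h with
  | refl => exact absurd hj hi
  | @tail b c _ hbc ih =>
    by_cases hb : b ∈ T
    · exact ih hb
    · exact ⟨b, c, hbc, hb, hj⟩

theorem Finset.eq_univ_of_monotone_of_ssubset {ι : Type*} [Fintype ι] {S : ℕ → Finset ι}
    {L : ℕ} (hS : Monotone S) (h0 : (S 0).Nonempty)
    (hgrow : ∀ t, S t ≠ univ → S t ⊂ S (t + L)) :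
    S (L * (Fintype.card ι - 1)) = univ := by
  have hcard : ∀ p, min (p + 1) (Fintype.card ι) ≤ #(S (L * p)) := by
    intro p
    induction p with
    | zero => rw [mul_zero]; exact (min_le_left _ _).trans h0.card_pos
    | succ p ih =>
      have hle : #(S (L * p)) ≤ #(S (L * (p + 1))) := card_le_card (hS (by gcongr; omega))
      by_cases hp : S (L * p) = univ
      · rw [hp, card_univ] at hle
        omega
      · have hlt := card_lt_card (hgrow _ hp)
        rw [← mul_add_one] at hlt
        omega
  have hpos : 0 < Fintype.card ι := Fintype.card_pos_iff.2 ⟨h0.choose⟩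
  apply eq_univ_of_card
  have := hcard (Fintype.card ι - 1)
  have := card_le_univ (S (L * (Fintype.card ι - 1)))
  omega

section WeightedSums

variable {ι : Type*} [Fintype ι] {w y : ι → ℝ}

theorem sum_mul_le_of_le {M : ℝ} (hw : ∀ j, 0 ≤ w j) (hw1 : ∑ j, w j = 1) (hy : ∀ j, y j ≤ M) :
    ∑ j, w j * y j ≤ M :=
  calc ∑ j, w j * y j ≤ ∑ j, w j * M :=
        sum_le_sum fun j _ => mul_le_mul_of_nonneg_left (hy j) (hw j)
    _ = M := by rw [← sum_mul, hw1, one_mul]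

theorem le_sum_mul_of_le {m : ℝ} (hw : ∀ j, 0 ≤ w j) (hw1 : ∑ j, w j = 1) (hy : ∀ j, m ≤ y j) :
    m ≤ ∑ j, w j * y j :=
  calc m = ∑ j, w j * m := by rw [← sum_mul, hw1, one_mul]
    _ ≤ ∑ j, w j * y j := sum_le_sum fun j _ => mul_le_mul_of_nonneg_left (hy j) (hw j)

theorem sum_mul_le_sub_mul_sub {M : ℝ} (hw : ∀ j, 0 ≤ w j) (hw1 : ∑ j, w j = 1)
    (hy : ∀ j, y j ≤ M) (j₀ : ι) :
    ∑ j, w j * y j ≤ M - w j₀ * (M - y j₀) := by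
  have hsingle : w j₀ * (M - y j₀) ≤ ∑ j, w j * (M - y j) :=
    single_le_sum (f := fun j => w j * (M - y j))
      (fun j _ => mul_nonneg (hw j) (sub_nonneg.2 (hy j))) (mem_univ j₀)
  have hgap : ∑ j, w j * (M - y j) = M - ∑ j, w j * y j := by
    simp only [mul_sub, sum_sub_distrib, ← sum_mul, hw1, one_mul]
  linarith

end WeightedSums

section AveragingDynamics

variable {ι : Type*} [Fintype ι]

structure IsAveragingDynamics (a : ℕ → ι → ι → ℝ) (x : ℕ → ι → ℝ) : Prop where
  nonneg : ∀ k i j, 0 ≤ a k i j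
  sum_eq_one : ∀ k i, ∑ j, a k i j = 1
  step : ∀ k i, x (k + 1) i = ∑ j, a k i j * x k j

variable {a : ℕ → ι → ι → ℝ} {x : ℕ → ι → ℝ}

theorem IsAveragingDynamics.le_sub_mul_of_le_sub (h : IsAveragingDynamics a x) {s : ℕ}
    {M ε α : ℝ} {i j : ι} (hM : ∀ j, x s j ≤ M) (hε : 0 ≤ ε) (hj : x s j ≤ M - ε)
    (hij : α ≤ a s i j) :
    x (s + 1) i ≤ M - α * ε := by
  have hgap : α * ε ≤ a s i j * (M - x s j) :=
    mul_le_mul hij (by linarith) hε (h.nonneg s i j)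
  rw [h.step]
  linarith [sum_mul_le_sub_mul_sub (h.nonneg s i) (h.sum_eq_one s i) hM j]

variable [Nonempty ι]

noncomputable def stateMax (x : ℕ → ι → ℝ) (k : ℕ) : ℝ := univ.sup' univ_nonempty (x k)

noncomputable def stateMin (x : ℕ → ι → ℝ) (k : ℕ) : ℝ := univ.inf' univ_nonempty (x k)

theorem le_stateMax (x : ℕ → ι → ℝ) (k : ℕ) (i : ι) : x k i ≤ stateMax x k :=
  le_sup' _ (mem_univ i)

theorem stateMin_le (x : ℕ → ι → ℝ) (k : ℕ) (i : ι) : stateMin x k ≤ x k i :=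
  inf'_le _ (mem_univ i)

theorem stateMin_le_stateMax (x : ℕ → ι → ℝ) (k : ℕ) : stateMin x k ≤ stateMax x k :=
  (stateMin_le x k (Classical.arbitrary ι)).trans (le_stateMax x k _)

namespace IsAveragingDynamics

theorem stateMax_antitone (h : IsAveragingDynamics a x) : Antitone (stateMax x) :=
  antitone_nat_of_succ_le fun k => sup'_le _ _ fun i _ => by
    rw [h.step]
    exact sum_mul_le_of_le (h.nonneg k i) (h.sum_eq_one k i) (le_stateMax x k)

theorem stateMin_monotone (h : IsAveragingDynamics a x) : Monotone (stateMin x) :=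
  monotone_nat_of_le_succ fun k => le_inf' _ _ fun i _ => by
    rw [h.step]
    exact le_sum_mul_of_le (h.nonneg k i) (h.sum_eq_one k i) (stateMin_le x k)

theorem stateMax_add_le (h : IsAveragingDynamics a x) {α : ℝ} {B : ℕ} (hα : 0 ≤ α)
    (hpos : ∀ k i j, 0 < a k i j → α ≤ a k i j) (hself : ∀ k i, α ≤ a k i i)
    (hconn : ∀ k : ℕ, ∀ i j : ι,
      Relation.ReflTransGen (fun u v : ι => ∃ s, k ≤ s ∧ s ≤ k + B ∧ 0 < a s u v) i j)
    (k : ℕ) :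
    stateMax x (k + (B + 1) * (Fintype.card ι - 1)) ≤
      stateMax x k - α ^ ((B + 1) * (Fintype.card ι - 1)) * (stateMax x k - stateMin x k) := by
  set M := stateMax x k
  set δ := M - stateMin x k
  have hδ : 0 ≤ δ := sub_nonneg.2 (stateMin_le_stateMax x k)
  have hM : ∀ t j, x (k + t) j ≤ M := fun t j =>
    (le_stateMax x _ j).trans (h.stateMax_antitone (Nat.le_add_right k t))
  set S : ℕ → Finset ι := fun t => {i | x (k + t) i ≤ M - α ^ t * δ}
  have mem_S {t : ℕ} {i : ι} : i ∈ S t ↔ x (k + t) i ≤ M - α ^ t * δ := by simp [S]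
  have step {t : ℕ} {i j : ι} (hj : j ∈ S t) (hij : α ≤ a (k + t) i j) : i ∈ S (t + 1) := by
    rw [mem_S, pow_succ', mul_assoc, ← add_assoc]
    exact h.le_sub_mul_of_le_sub (hM t) (by positivity) (mem_S.1 hj) hij
  have hS : Monotone S := monotone_nat_of_le_succ fun t i hi => step hi (hself _ i)
  have hS0 : (S 0).Nonempty := by
    obtain ⟨j₀, -, hj₀⟩ := exists_mem_eq_inf' univ_nonempty (x k)
    exact ⟨j₀, mem_S.2 (by simp [δ, stateMin, ← hj₀])⟩
  have hwindow {t : ℕ} {u v : ι} (hv : v ∈ S t)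
      (huv : ∃ s, k + t ≤ s ∧ s ≤ k + t + B ∧ 0 < a s u v) : u ∈ S (t + (B + 1)) := by
    obtain ⟨s, hts, hsB, has⟩ := huv
    obtain ⟨d, rfl⟩ := Nat.exists_eq_add_of_le (le_of_add_le_left hts)
    exact hS (by omega) (step (hS (by omega) hv) (hpos _ u v has))
  have hgrow : ∀ t, S t ≠ univ → S t ⊂ S (t + (B + 1)) := by
    intro t ht
    obtain ⟨i, hi⟩ : ∃ i, i ∉ S t := by simpa [eq_univ_iff_forall] using ht
    obtain ⟨j₀, hj₀⟩ := hS0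
    obtain ⟨u, v, huv, hu, hv⟩ := (hconn (k + t) i j₀).exists_rel_of_notMem_of_mem
      (T := (S t : Set ι)) hi (hS (Nat.zero_le t) hj₀)
    exact (ssubset_iff_of_subset (hS (Nat.le_add_right _ _))).2 ⟨u, hwindow hv huv, hu⟩
  have hfull := eq_univ_of_monotone_of_ssubset hS hS0 hgrow
  exact sup'_le _ _ fun i _ => mem_S.1 (hfull ▸ mem_univ i)

end IsAveragingDynamics

end AveragingDynamics

theorem tendsto_zero_of_antitone_of_le_mul {D : ℕ → ℝ} {q : ℝ} {T : ℕ} (hD : Antitone D)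
    (hD0 : ∀ k, 0 ≤ D k) (hq0 : 0 ≤ q) (hq1 : q < 1) (hcontr : ∀ k, D (k + T) ≤ q * D k) :
    Tendsto D atTop (nhds 0) := by
  have hgeom : ∀ p, D (T * p) ≤ q ^ p * D 0 := by
    intro p
    induction p with
    | zero => simp
    | succ p ih =>
      calc D (T * (p + 1)) ≤ q * D (T * p) := by rw [mul_add_one]; exact hcontr _
        _ ≤ q * (q ^ p * D 0) := mul_le_mul_of_nonneg_left ih hq0
        _ = q ^ (p + 1) * D 0 := by ring
  have hbdd : BddBelow (Set.range D) := ⟨0, Set.forall_mem_range.2 hD0⟩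
  have hinf : ⨅ k, D k = 0 := by
    have hq : Tendsto (fun p => q ^ p * D 0) atTop (nhds 0) := by
      simpa using (tendsto_pow_atTop_nhds_zero_of_lt_one hq0 hq1).mul_const (D 0)
    exact le_antisymm (ge_of_tendsto' hq fun p => (ciInf_le hbdd _).trans (hgeom p))
      (le_ciInf hD0)
  exact hinf ▸ tendsto_atTop_ciInf hD hbdd

theorem exists_tendsto_of_antitone_of_monotone {M m : ℕ → ℝ} (hM : Antitone M)
    (hm : Monotone m) (hmM : ∀ k, m k ≤ M k) (hlim : Tendsto (fun k => M k - m k) atTop (nhds 0)) :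
    ∃ c, Tendsto M atTop (nhds c) ∧ Tendsto m atTop (nhds c) := by
  have hbdd : BddBelow (Set.range M) :=
    ⟨m 0, Set.forall_mem_range.2 fun k => (hm (Nat.zero_le k)).trans (hmM k)⟩
  have hMc := tendsto_atTop_ciInf hM hbdd
  refine ⟨_, hMc, ?_⟩
  simpa using hMc.sub hlim

theorem time_varying_averaging_converges_to_consensus_general
    (n : ℕ) (a : ℕ → Fin n → Fin n → ℝ) (α : ℝ) (hα0 : 0 < α) (hα1 : α < 1)
    (B : ℕ)
    (hweights : ∀ k i j, a k i j = 0 ∨ (α ≤ a k i j ∧ a k i j ≤ 1))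
    (hself : ∀ k i, α ≤ a k i i)
    (hrow : ∀ k i, ∑ j, a k i j = 1)
    (hconn : ∀ k : ℕ, ∀ i j : Fin n,
      Relation.ReflTransGen (fun u v : Fin n => ∃ s, k ≤ s ∧ s ≤ k + B ∧ 0 < a s u v) i j)
    (x : ℕ → Fin n → ℝ)
    (hdyn : ∀ k i, x (k + 1) i = ∑ j, a k i j * x k j) :
    ∃ c : ℝ, ∀ i, Tendsto (fun k => x k i) atTop (nhds c) := by
  rcases isEmpty_or_nonempty (Fin n) with hn | hn
  · exact ⟨0, isEmptyElim⟩
  have h : IsAveragingDynamics a x :=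
    ⟨fun k i j => (hweights k i j).elim (·.ge) fun hw => hα0.le.trans hw.1, hrow, hdyn⟩
  have hpos : ∀ k i j, 0 < a k i j → α ≤ a k i j := fun k i j has =>
    ((hweights k i j).resolve_left has.ne').1
  set T := (B + 1) * (Fintype.card (Fin n) - 1)
  have hαT : 0 < α ^ T := pow_pos hα0 T
  have hcontr : ∀ k, stateMax x (k + T) - stateMin x (k + T) ≤
      (1 - α ^ T) * (stateMax x k - stateMin x k) := fun k => by
    have := h.stateMax_add_le hα0.le hpos hself hconn k
    have := h.stateMin_monotone (Nat.le_add_right k T)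
    linarith
  obtain ⟨c, hMc, hmc⟩ := exists_tendsto_of_antitone_of_monotone h.stateMax_antitone
    h.stateMin_monotone (stateMin_le_stateMax x)
    (tendsto_zero_of_antitone_of_le_mul
      (fun k l hkl => sub_le_sub (h.stateMax_antitone hkl) (h.stateMin_monotone hkl))
      (fun k => sub_nonneg.2 (stateMin_le_stateMax x k))
      (sub_nonneg.2 (pow_le_one₀ hα0.le hα1.le)) (by linarith) hcontr)
  exact ⟨c, fun i => tendsto_of_tendsto_of_tendsto_of_le_of_le hmc hMc
    (stateMin_le x · i) (le_stateMax x · i)⟩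

/-- time-varying averaging dynamics with weights bounded away from zero,
positive self-weights, unit row sums, and `B`-strong connectivity of the union graphs,
converge to consensus. Strong connectivity of the union graph over the window
`[k, k+B]` is expressed as reachability (reflexive-transitive closure of the edge
relation) between every ordered pair of agents. -/
theorem time_varying_averaging_converges_to_consensus
    (n : ℕ) (a : ℕ → Fin n → Fin n → ℝ) (α : ℝ) (hα0 : 0 < α) (hα1 : α < 1)
    (B : ℕ) (hB : 0 < B)
    (hweights : ∀ k i j, a k i j = 0 ∨ (α ≤ a k i j ∧ a k i j ≤ 1))
    (hself : ∀ k i, α ≤ a k i i)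
    (hrow : ∀ k i, ∑ j, a k i j = 1)
    (hconn : ∀ k : ℕ, ∀ i j : Fin n,
      Relation.ReflTransGen (fun u v : Fin n => ∃ s, k ≤ s ∧ s ≤ k + B ∧ 0 < a s u v) i j)
    (x : ℕ → Fin n → ℝ)
    (hdyn : ∀ k i, x (k + 1) i = ∑ j, a k i j * x k j) :
    ∃ c : ℝ, ∀ i, Tendsto (fun k => x k i) atTop (nhds c) :=
  time_varying_averaging_converges_to_consensus_general n a α hα0 hα1 B hweights hself hrow hconn x
    hdyn
end

section
/- Let m > 0. For each i ∈ [n] let f_i: ℝ → ℝ be twice continuously differentiable and bounded below, and for each ordered pair i ≠ j let g_ij: ℝ² → ℝ be twice continuously differentiable, bounded below, and symmetric, i.e., g_ij(a,b) = g_ji(b,a) for all a,b ∈ ℝ. Assume all second-order derivatives of every f_i and all second-order partial derivatives of every g_ij are bounded in absolute value by m. Define the state-dependent network dynamics x_i^{k+1} = x_i^k − [f_i'(x_i^k) + ∑_{j ∈ N_i(x^k)} ∂g_ij/∂x_i (x_i^k, x_j^k)] / (2m(|N_i(x^k)|+1)) for i ∈ [n]. Then the function V(x) := ∑_i f_i(x_i)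 + ½ ∑_{i≠j} min{g_ij(x_i,x_j), 0} satisfies V(x^{k+1}) ≤ V(x^k) − m‖x^{k+1} − x^k‖² for every k ≥ 0. -/
/-!
The second-derivative bounds give quadratic upper bounds (descent lemmas) with constant `m` for
each `f i` and `2 * m` for each `g i j`. For `j ∈ N_i(x)` the term `min (g i j) 0` is bounded at
`x⁺` by the upper bound of `g i j` at `x`; otherwise it is `0` at `x` and `≤ 0` at `x⁺`. The
symmetry `g i j a b = g j i b a` makes `j ∈ N_i(x) ↔ i ∈ N_j(x)`, so in the sum over ordered pairs
the partial derivatives in the second slot become partial derivatives of `g j i` in the first slot.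
With `u = x⁺ - x`, the upper bound for `V(x⁺) - V(x)` is then
`∑ i, (f_i' + ∑_{j ∈ N_i} ∂₁g_ij) u_i + m (2 |N_i| + 1) u_i²`, and the step size
`1 / (2m(|N_i| + 1))` turns this into `-m ∑ i, u_i²`.
-/

open Finset

theorem le_add_deriv_add_of_abs_deriv_sub_le {φ φ' : ℝ → ℝ} {C : ℝ}
    (hφ : ∀ t, HasDerivAt φ (φ' t) t) (hC : ∀ t ∈ Set.Icc (0 : ℝ) 1, |φ' t - φ' 0| ≤ C) :
    φ 1 ≤ φ 0 + φ' 0 + C := by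
  have hψ : ∀ t ∈ Set.Icc (0 : ℝ) 1,
      HasDerivWithinAt (fun t => φ t - t * φ' 0) (φ' t - φ' 0) (Set.Icc 0 1) t := fun t _ => by
    simpa only [one_mul] using
      ((hφ t).fun_sub ((hasDerivAt_id' t).mul_const (φ' 0))).hasDerivWithinAt
  have hmvt := norm_image_sub_le_of_norm_deriv_le_segment_01' hψ
    fun t ht => hC t (Set.Ico_subset_Icc_self ht)
  rw [Real.norm_eq_abs] at hmvt
  linarith [le_abs_self (φ 1 - 1 * φ' 0 - (φ 0 - 0 * φ' 0))]

theorem abs_sub_le_of_abs_deriv_le {h : ℝ → ℝ} {C : ℝ} (hh : Differentiable ℝ h)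
    (hC : ∀ t, |deriv h t| ≤ C) (a b : ℝ) : |h b - h a| ≤ C * |b - a| :=
  Convex.norm_image_sub_le_of_norm_deriv_le (fun t _ => hh t) (fun t _ => hC t) convex_univ
    trivial trivial

theorem abs_mul_le_abs_of_mem_Icc {t : ℝ} (ht : t ∈ Set.Icc (0 : ℝ) 1) (u : ℝ) :
    |t * u| ≤ |u| := by
  rw [abs_mul]
  exact mul_le_of_le_one_left (abs_nonneg u) (abs_le.2 ⟨by linarith [ht.1], ht.2⟩)

theorem le_add_deriv_mul_add_sq {h : ℝ → ℝ} {m : ℝ} (hh : ContDiff ℝ 2 h)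
    (hm : ∀ t, |deriv (deriv h) t| ≤ m) (a u : ℝ) :
    h (a + u) ≤ h a + deriv h a * u + m * u ^ 2 := by
  have hh' : Differentiable ℝ (deriv h) := (hh.iterate_deriv' 1 1).differentiable one_ne_zero
  have hline : ∀ t, HasDerivAt (fun t => h (a + t * u)) (deriv h (a + t * u) * u) t := fun t => by
    simpa only [Function.comp_def, one_mul] using
      (hh.differentiable two_ne_zero _).hasDerivAt.comp t
        (((hasDerivAt_id' t).mul_const u).const_add a)
  have key := le_add_deriv_add_of_abs_deriv_sub_le hline (C := m * u ^ 2) fun t ht => ?_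
  · simpa using key
  have hm0 : 0 ≤ m := (abs_nonneg _).trans (hm 0)
  simp only [zero_mul, add_zero]
  calc |deriv h (a + t * u) * u - deriv h a * u|
      = |deriv h (a + t * u) - deriv h a| * |u| := by rw [← sub_mul, abs_mul]
    _ ≤ m * |t * u| * |u| := by gcongr; simpa using abs_sub_le_of_abs_deriv_le hh' hm a (a + t * u)
    _ ≤ m * |u| * |u| := by gcongr m * ?_ * _; exact abs_mul_le_abs_of_mem_Icc ht u
    _ = m * u ^ 2 := by rw [mul_assoc, ← abs_mul, abs_mul_self, sq]

section TwoVariables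

variable {G : ℝ → ℝ → ℝ}

theorem hasDerivAt_fst_section (hG : Differentiable ℝ (fun p : ℝ × ℝ => G p.1 p.2)) (a b : ℝ) :
    HasDerivAt (fun s => G s b) (fderiv ℝ (fun p : ℝ × ℝ => G p.1 p.2) (a, b) (1, 0)) a :=
  (hG _).hasFDerivAt.comp_hasDerivAt (f := fun s => (s, b)) a
    ((hasDerivAt_id a).prodMk (hasDerivAt_const a b))

theorem hasDerivAt_snd_section (hG : Differentiable ℝ (fun p : ℝ × ℝ => G p.1 p.2)) (a b : ℝ) :
    HasDerivAt (fun s => G a s) (fderiv ℝ (fun p : ℝ × ℝ => G p.1 p.2) (a, b) (0, 1)) b :=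
  (hG _).hasFDerivAt.comp_hasDerivAt (f := fun s => (a, s)) b
    ((hasDerivAt_const b a).prodMk (hasDerivAt_id b))

theorem hasDerivAt_comp_line (hG : Differentiable ℝ (fun p : ℝ × ℝ => G p.1 p.2))
    (a b u v t : ℝ) :
    HasDerivAt (fun t => G (a + t * u) (b + t * v))
      (deriv (fun s => G s (b + t * v)) (a + t * u) * u
        + deriv (fun s => G (a + t * u) s) (b + t * v) * v) t := by
  have hline :
      HasDerivAt (fun t => (a + t * u, b + t * v)) (u • ((1 : ℝ), (0 : ℝ)) + v • (0, 1)) t := by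
    simpa using (((hasDerivAt_id' t).mul_const u).const_add a).prodMk
      (((hasDerivAt_id' t).mul_const v).const_add b)
  have := (hG _).hasFDerivAt.comp_hasDerivAt t hline
  rw [map_add, map_smul, map_smul, smul_eq_mul, smul_eq_mul] at this
  rw [(hasDerivAt_fst_section hG _ _).deriv, (hasDerivAt_snd_section hG _ _).deriv]
  exact this.congr_deriv (by ring)

theorem differentiable_deriv_fst_section (hG : ContDiff ℝ 2 (fun p : ℝ × ℝ => G p.1 p.2)) :
    Differentiable ℝ (fun p : ℝ × ℝ => deriv (fun s => G s p.2) p.1) := by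
  simp_rw [fun p : ℝ × ℝ => (hasDerivAt_fst_section (hG.differentiable two_ne_zero) p.1 p.2).deriv]
  exact ((hG.fderiv_right le_rfl).differentiable one_ne_zero).clm_apply (differentiable_const _)

theorem differentiable_deriv_snd_section (hG : ContDiff ℝ 2 (fun p : ℝ × ℝ => G p.1 p.2)) :
    Differentiable ℝ (fun p : ℝ × ℝ => deriv (fun s => G p.1 s) p.2) := by
  simp_rw [fun p : ℝ × ℝ => (hasDerivAt_snd_section (hG.differentiable two_ne_zero) p.1 p.2).deriv]
  exact ((hG.fderiv_right le_rfl).differentiable one_ne_zero).clm_apply (differentiable_const _)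

theorem abs_sub_le_of_abs_partial_deriv_le {C : ℝ}
    (hG : Differentiable ℝ (fun p : ℝ × ℝ => G p.1 p.2))
    (h₁ : ∀ a b, |deriv (fun s => G s b) a| ≤ C) (h₂ : ∀ a b, |deriv (fun s => G a s) b| ≤ C)
    (a b a' b' : ℝ) : |G a' b' - G a b| ≤ C * (|a' - a| + |b' - b|) := by
  have hfst := abs_sub_le_of_abs_deriv_le
    (hG.comp (differentiable_id.prodMk (differentiable_const b))) (h₁ · b) a a'
  have hsnd := abs_sub_le_of_abs_deriv_le
    (hG.comp ((differentiable_const a').prodMk differentiable_id)) (h₂ a' ·) b b'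
  calc |G a' b' - G a b| ≤ |G a' b' - G a' b| + |G a' b - G a b| := abs_sub_le _ _ _
    _ ≤ C * (|a' - a| + |b' - b|) := by simp only [Function.comp_def, id] at hfst hsnd; linarith

theorem le_add_partial_deriv_mul_add_sq {m : ℝ} (hG : ContDiff ℝ 2 (fun p : ℝ × ℝ => G p.1 p.2))
    (h11 : ∀ a b, |deriv (fun t => deriv (fun s => G s b) t) a| ≤ m)
    (h12 : ∀ a b, |deriv (fun t => deriv (fun s => G t s) b) a| ≤ m)
    (h21 : ∀ a b, |deriv (fun s => deriv (fun t => G t s) a) b| ≤ m)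
    (h22 : ∀ a b, |deriv (fun s => deriv (fun t => G a t) s) b| ≤ m) (a b u v : ℝ) :
    G (a + u) (b + v) ≤ G a b + deriv (fun s => G s b) a * u + deriv (fun s => G a s) b * v
      + 2 * m * (u ^ 2 + v ^ 2) := by
  have key := le_add_deriv_add_of_abs_deriv_sub_le
    (hasDerivAt_comp_line (hG.differentiable two_ne_zero) a b u v) (C := 2 * m * (u ^ 2 + v ^ 2))
    fun t ht => ?_
  · simpa [add_assoc] using key
  have hm : 0 ≤ m := (abs_nonneg _).trans (h11 0 0)
  have hdist : m * (|a + t * u - a| + |b + t * v - b|) ≤ m * (|u| + |v|) := by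
    simp only [add_sub_cancel_left]
    gcongr m * (?_ + ?_) <;> exact abs_mul_le_abs_of_mem_Icc ht _
  have hfst := abs_sub_le_of_abs_partial_deriv_le (differentiable_deriv_fst_section hG) h11 h21
    a b (a + t * u) (b + t * v)
  have hsnd := abs_sub_le_of_abs_partial_deriv_le (differentiable_deriv_snd_section hG) h12 h22
    a b (a + t * u) (b + t * v)
  simp only [zero_mul, add_zero]
  calc _ = |(deriv (fun s => G s (b + t * v)) (a + t * u) - deriv (fun s => G s b) a) * u
          + (deriv (fun s => G (a + t * u) s) (b + t * v) - deriv (fun s => G a s) b) * v| := by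
        congr 1; ring
    _ ≤ m * (|u| + |v|) * |u| + m * (|u| + |v|) * |v| := by
        refine (abs_add_le _ _).trans ?_
        rw [abs_mul, abs_mul]
        gcongr <;> linarith
    _ ≤ 2 * m * (u ^ 2 + v ^ 2) := by
        nlinarith [sq_abs u, sq_abs v, sq_nonneg (|u| - |v|)]

end TwoVariables

theorem min_zero_le_add_ite {p q B : ℝ} (h : p ≤ 0 → q ≤ p + B) :
    min q 0 ≤ min p 0 + if p ≤ 0 then B else 0 := by
  split_ifs with hp
  · rw [min_eq_left hp]; exact (min_le_left _ _).trans (h hp)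
  · rw [min_eq_right (not_le.1 hp).le, add_zero]; exact min_le_right _ _

theorem sum_sum_comm_of_mem_comm {ι M : Type*} [Fintype ι] [AddCommMonoid M] {S : ι → Finset ι}
    (hS : ∀ i j, j ∈ S i ↔ i ∈ S j) (F : ι → ι → M) :
    ∑ i, ∑ j ∈ S i, F i j = ∑ i, ∑ j ∈ S i, F j i :=
  Finset.sum_comm' fun i j => by simp [hS i j]

section NetworkDynamics

variable {ι : Type*} [Fintype ι] [DecidableEq ι]

noncomputable def neighbors (g : ι → ι → ℝ → ℝ → ℝ) (x : ι → ℝ) (i : ι) : Finset ι :=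
  univ.filter fun j => j ≠ i ∧ g i j (x i) (x j) ≤ 0

noncomputable def lyapunov (f : ι → ℝ → ℝ) (g : ι → ι → ℝ → ℝ → ℝ) (x : ι → ℝ) : ℝ :=
  ∑ i, f i (x i) + (1/2) * ∑ i, ∑ j ∈ univ.filter (fun j => j ≠ i), min (g i j (x i) (x j)) 0

variable {g : ι → ι → ℝ → ℝ → ℝ}

theorem mem_neighbors_comm (hsym : ∀ i j a b, i ≠ j → g i j a b = g j i b a) (x : ι → ℝ)
    (i j : ι) : j ∈ neighbors g x i ↔ i ∈ neighbors g x j := by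
  simp only [neighbors, mem_filter, mem_univ, true_and]
  constructor <;> rintro ⟨hne, hg⟩ <;> refine ⟨hne.symm, ?_⟩
  · rwa [← hsym i j _ _ hne.symm]
  · rwa [hsym i j _ _ hne]

theorem sum_min_zero_le_add_sum_neighbors {m : ℝ} {x y : ι → ℝ}
    (hg : ∀ i j, i ≠ j → ∀ a b u v, g i j (a + u) (b + v) ≤ g i j a b
      + deriv (fun s => g i j s b) a * u + deriv (fun s => g i j a s) b * v
      + 2 * m * (u ^ 2 + v ^ 2)) (i : ι) :
    ∑ j ∈ univ.filter (fun j => j ≠ i), min (g i j (y i) (y j)) 0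
      ≤ ∑ j ∈ univ.filter (fun j => j ≠ i), min (g i j (x i) (x j)) 0
        + ∑ j ∈ neighbors g x i, (deriv (fun s => g i j s (x j)) (x i) * (y i - x i)
          + deriv (fun s => g i j (x i) s) (x j) * (y j - x j)
          + 2 * m * ((y i - x i) ^ 2 + (y j - x j) ^ 2)) := by
  rw [neighbors, ← filter_filter, sum_filter (s := univ.filter _), ← sum_add_distrib]
  refine sum_le_sum fun j hj => min_zero_le_add_ite fun _ => ?_
  simpa only [add_sub_cancel, add_assoc] using
    hg i j (mem_filter.1 hj).2.symm (x i) (x j) (y i - x i) (y j - x j)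

theorem sum_neighbors_pair_descent_eq (hsym : ∀ i j a b, i ≠ j → g i j a b = g j i b a)
    (m : ℝ) (x u : ι → ℝ) :
    ∑ i, ∑ j ∈ neighbors g x i, (deriv (fun s => g i j s (x j)) (x i) * u i
        + deriv (fun s => g i j (x i) s) (x j) * u j + 2 * m * (u i ^ 2 + u j ^ 2))
      = 2 * ∑ i, ∑ j ∈ neighbors g x i,
        (deriv (fun s => g i j s (x j)) (x i) * u i + 2 * m * u i ^ 2) := by
  have hderiv : ∀ i, ∀ j ∈ neighbors g x i,
      deriv (fun s => g j i (x j) s) (x i) = deriv (fun s => g i j s (x j)) (x i) := by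
    intro i j hj
    have hij : i ≠ j := ((mem_filter.1 hj).2.1).symm
    simp_rw [← hsym i j _ _ hij]
  have hswap : ∑ i, ∑ j ∈ neighbors g x i,
        (deriv (fun s => g i j (x i) s) (x j) * u j + 2 * m * u j ^ 2)
      = ∑ i, ∑ j ∈ neighbors g x i,
        (deriv (fun s => g i j s (x j)) (x i) * u i + 2 * m * u i ^ 2) := by
    rw [sum_sum_comm_of_mem_comm (mem_neighbors_comm hsym x)
      (fun i j => deriv (fun s => g i j (x i) s) (x j) * u j + 2 * m * u j ^ 2)]
    exact sum_congr rfl fun i _ => sum_congr rfl fun j hj => by rw [hderiv i j hj]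
  calc _ = ∑ i, ∑ j ∈ neighbors g x i,
          (deriv (fun s => g i j s (x j)) (x i) * u i + 2 * m * u i ^ 2)
        + ∑ i, ∑ j ∈ neighbors g x i,
          (deriv (fun s => g i j (x i) s) (x j) * u j + 2 * m * u j ^ 2) := by
        simp only [← sum_add_distrib]
        exact sum_congr rfl fun i _ => sum_congr rfl fun j _ => by ring
    _ = _ := by rw [hswap]; ring

theorem lyapunov_le_sub_of_step {m : ℝ} (hm : 0 < m) {f : ι → ℝ → ℝ}
    (hsym : ∀ i j a b, i ≠ j → g i j a b = g j i b a)
    (hf : ∀ i a u, f i (a + u) ≤ f i a + deriv (f i) a * u + m * u ^ 2)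
    (hg : ∀ i j, i ≠ j → ∀ a b u v, g i j (a + u) (b + v) ≤ g i j a b
      + deriv (fun s => g i j s b) a * u + deriv (fun s => g i j a s) b * v
      + 2 * m * (u ^ 2 + v ^ 2))
    {x y : ι → ℝ} (hy : ∀ i, y i = x i - (deriv (f i) (x i)
      + ∑ j ∈ neighbors g x i, deriv (fun t => g i j t (x j)) (x i))
        / (2 * m * ((#(neighbors g x i) : ℝ) + 1))) :
    lyapunov f g y ≤ lyapunov f g x - m * ∑ i, (y i - x i) ^ 2 := by
  set u := fun i => y i - x i with hu
  have hfsum : ∑ i, f i (y i) ≤ ∑ i, (f i (x i) + deriv (f i) (x i) * u i + m * u i ^ 2) :=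
    sum_le_sum fun i _ => by simpa only [hu, add_sub_cancel] using hf i (x i) (u i)
  have hgsum := sum_le_sum fun i (_ : i ∈ univ) =>
    sum_min_zero_le_add_sum_neighbors (x := x) (y := y) hg i
  rw [sum_add_distrib, sum_neighbors_pair_descent_eq hsym m x u] at hgsum
  have hdescent : ∀ i, deriv (f i) (x i) * u i + m * u i ^ 2 + ∑ j ∈ neighbors g x i,
      (deriv (fun s => g i j s (x j)) (x i) * u i + 2 * m * u i ^ 2) = -(m * u i ^ 2) := by
    intro i
    have hcard : 2 * m * ((#(neighbors g x i) : ℝ) + 1) ≠ 0 := by positivity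
    have hui : u i * (2 * m * ((#(neighbors g x i) : ℝ) + 1)) = -(deriv (f i) (x i)
        + ∑ j ∈ neighbors g x i, deriv (fun t => g i j t (x j)) (x i)) := by
      simp only [hu]; rw [hy i]; field_simp; ring
    rw [sum_add_distrib, ← sum_mul, sum_const, nsmul_eq_mul]
    linear_combination u i * hui
  have hsum := sum_congr rfl fun i (_ : i ∈ univ) => hdescent i
  rw [sum_add_distrib, sum_add_distrib, sum_neg_distrib, ← mul_sum] at hsum
  rw [sum_add_distrib, sum_add_distrib, ← mul_sum] at hfsum
  have hnorm : ∑ i, (y i - x i) ^ 2 = ∑ i, u i ^ 2 := rfl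
  rw [lyapunov, lyapunov]
  linarith

end NetworkDynamics

theorem bcd_state_dependent_dynamics_lyapunov_general
    (n : ℕ) (m : ℝ) (hm : 0 < m)
    (f : Fin n → ℝ → ℝ) (g : Fin n → Fin n → ℝ → ℝ → ℝ)
    (hfC : ∀ i, ContDiff ℝ 2 (f i))
    (hgC : ∀ i j, i ≠ j → ContDiff ℝ 2 (fun p : ℝ × ℝ => g i j p.1 p.2))
    (hsym : ∀ i j a b, i ≠ j → g i j a b = g j i b a)
    (hf2 : ∀ i t, |deriv (deriv (f i)) t| ≤ m)
    (hg11 : ∀ i j a b, i ≠ j → |deriv (fun t => deriv (fun s => g i j s b) t) a| ≤ m)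
    (hg12 : ∀ i j a b, i ≠ j → |deriv (fun t => deriv (fun s => g i j t s) b) a| ≤ m)
    (hg21 : ∀ i j a b, i ≠ j → |deriv (fun s => deriv (fun t => g i j t s) a) b| ≤ m)
    (hg22 : ∀ i j a b, i ≠ j → |deriv (fun s => deriv (fun t => g i j a t) s) b| ≤ m)
    (x : ℕ → EuclideanSpace ℝ (Fin n))
    (hdyn : ∀ k i, x (k + 1) i = x k i -
      (deriv (f i) (x k i) +
        ∑ j ∈ Finset.univ.filter (fun j => j ≠ i ∧ g i j (x k i) (x k j) ≤ 0),
          deriv (fun t => g i j t (x k j)) (x k i)) /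
      (2 * m * (((Finset.univ.filter
          (fun j => j ≠ i ∧ g i j (x k i) (x k j) ≤ 0)).card : ℝ) + 1))) :
    ∀ k : ℕ,
      (∑ i, f i (x (k+1) i) + (1/2) * ∑ i, ∑ j ∈ Finset.univ.filter (fun j => j ≠ i),
          min (g i j (x (k+1) i) (x (k+1) j)) 0)
      ≤ (∑ i, f i (x k i) + (1/2) * ∑ i, ∑ j ∈ Finset.univ.filter (fun j => j ≠ i),
          min (g i j (x k i) (x k j)) 0)
        - m * ‖x (k+1) - x k‖^2 := by
  intro k
  have hstep := lyapunov_le_sub_of_step hm hsym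
    (fun i => le_add_deriv_mul_add_sq (hfC i) (hf2 i))
    (fun i j hij => le_add_partial_deriv_mul_add_sq (hgC i j hij) (hg11 i j · · hij)
      (hg12 i j · · hij) (hg21 i j · · hij) (hg22 i j · · hij))
    (hdyn k)
  rw [EuclideanSpace.real_norm_sq_eq]
  simp only [PiLp.sub_apply]
  exact hstep

/-- the inexact-BCD state-dependent network dynamics admit
`V(x) = ∑ᵢ fᵢ(xᵢ) + ½ ∑_{i≠j} min{g_ij(xᵢ,xⱼ), 0}` as a Lyapunov function with drift
`V(x^{k+1}) ≤ V(x^k) − m‖x^{k+1} − x^k‖²`.  Neighborhoods are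
`N_i(x) = {j ≠ i : g_ij(xᵢ,xⱼ) ≤ 0}`. -/
theorem bcd_state_dependent_dynamics_lyapunov
    (n : ℕ) (m : ℝ) (hm : 0 < m)
    (f : Fin n → ℝ → ℝ) (g : Fin n → Fin n → ℝ → ℝ → ℝ)
    (hfC : ∀ i, ContDiff ℝ 2 (f i))
    (hfB : ∀ i, BddBelow (Set.range (f i)))
    (hgC : ∀ i j, i ≠ j → ContDiff ℝ 2 (fun p : ℝ × ℝ => g i j p.1 p.2))
    (hgB : ∀ i j, i ≠ j → BddBelow (Set.range (fun p : ℝ × ℝ => g i j p.1 p.2)))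
    (hsym : ∀ i j a b, i ≠ j → g i j a b = g j i b a)
    (hf2 : ∀ i t, |deriv (deriv (f i)) t| ≤ m)
    (hg11 : ∀ i j a b, i ≠ j → |deriv (fun t => deriv (fun s => g i j s b) t) a| ≤ m)
    (hg12 : ∀ i j a b, i ≠ j → |deriv (fun t => deriv (fun s => g i j t s) b) a| ≤ m)
    (hg21 : ∀ i j a b, i ≠ j → |deriv (fun s => deriv (fun t => g i j t s) a) b| ≤ m)
    (hg22 : ∀ i j a b, i ≠ j → |deriv (fun s => deriv (fun t => g i j a t) s) b| ≤ m)
    (x : ℕ → EuclideanSpace ℝ (Fin n))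
    (hdyn : ∀ k i, x (k + 1) i = x k i -
      (deriv (f i) (x k i) +
        ∑ j ∈ Finset.univ.filter (fun j => j ≠ i ∧ g i j (x k i) (x k j) ≤ 0),
          deriv (fun t => g i j t (x k j)) (x k i)) /
      (2 * m * (((Finset.univ.filter
          (fun j => j ≠ i ∧ g i j (x k i) (x k j) ≤ 0)).card : ℝ) + 1))) :
    ∀ k : ℕ,
      (∑ i, f i (x (k+1) i) + (1/2) * ∑ i, ∑ j ∈ Finset.univ.filter (fun j => j ≠ i),
          min (g i j (x (k+1) i) (x (k+1) j)) 0)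
      ≤ (∑ i, f i (x k i) + (1/2) * ∑ i, ∑ j ∈ Finset.univ.filter (fun j => j ≠ i),
          min (g i j (x k i) (x k j)) 0)
        - m * ‖x (k+1) - x k‖^2 :=
  bcd_state_dependent_dynamics_lyapunov_general n m hm f g hfC hgC hsym hf2 hg11 hg12 hg21 hg22 x
    hdyn
end

section
/- Let h_1, …, h_N: ℝⁿ → ℝ be finitely many strictly convex, continuously differentiable functions, each attaining a (necessarily unique) global minimum. Let {x^k}_{k≥0} ⊂ ℝⁿ be a sequence and σ: ℕ → {1,…,N} a map such that lim_{k→∞} ∇h_{σ(k)}(x^k) = 0 and lim_{k→∞} ‖x^{k+1} − x^k‖ = 0. Then the sequence {x^k} converges, and its limit is the global minimizer of h_j for some j ∈ {1,…,N}. -/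
open Filter Set Metric Topology

/-!
A strictly convex function grows at least linearly away from its minimizer `z`: on the sphere of
radius `ε` around `z` it exceeds `f z` by some `m > 0`, and convexity along segments from `z`
propagates this to `f x - f z ≥ (m / ε) ‖x - z‖` outside the ball. Against the first-order bound
`f x - f z ≤ ‖f' x‖ ‖x - z‖`, a small derivative therefore forces `x` into the ball, so the iterates
approach the minimizer of the currently active function. The finitely many minimizers are separated
by some `ε > 0`, while consecutive active minimizers eventually lie closer than `ε`; hence the
active minimizer is eventually constant, and the iterates converge to it.
-/

section

variable {E : Type*} [NormedAddCommGroup E] [NormedSpace ℝ E] {f : E → ℝ}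

theorem ConvexOn.add_fderiv_le {s : Set E} {f' : E →L[ℝ] ℝ} {x y : E} (hf : ConvexOn ℝ s f)
    (hx : x ∈ s) (hy : y ∈ s) (hfx : HasFDerivAt f f' x) : f x + f' (y - x) ≤ f y := by
  let g : ℝ →ᵃ[ℝ] E := AffineMap.lineMap x y
  have hderiv : HasDerivAt (f ∘ g) (f' (y - x)) 0 :=
    (AffineMap.lineMap_apply_zero (k := ℝ) x y ▸ hfx).comp_hasDerivAt 0
      AffineMap.hasDerivAt_lineMap
  have hslope := (hf.comp_affineMap g).le_slope_of_hasDerivAt (by simpa [g] using hx)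
    (by simpa [g] using hy) one_pos hderiv
  simp only [slope_def_field, Function.comp_apply, g, AffineMap.lineMap_apply_one,
    AffineMap.lineMap_apply_zero, sub_zero, div_one] at hslope
  linarith

variable [ProperSpace E]

theorem StrictConvexOn.exists_pos_mul_dist_le_sub (hf : StrictConvexOn ℝ univ f)
    (hcont : Continuous f) {z : E} (hz : IsMinOn f univ z) {ε : ℝ} (hε : 0 < ε) :
    ∃ m > 0, ∀ x, ε ≤ dist x z → m * dist x z ≤ f x - f z := by
  rcases subsingleton_or_nontrivial E with _ | _
  · refine ⟨1, one_pos, fun x hx => ?_⟩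
    rw [Subsingleton.elim x z, dist_self] at hx
    linarith
  obtain ⟨w, hw, hwmin⟩ := (isCompact_sphere z ε).exists_isMinOn
    (NormedSpace.sphere_nonempty.2 hε.le) hcont.continuousOn
  have hfw : f z < f w := by
    refine lt_of_not_ge fun hle => ?_
    have hwz : w = z := hf.eq_of_isMinOn (fun y _ => hle.trans (hz (mem_univ y))) hz
      (mem_univ w) (mem_univ z)
    simp [hwz, hε.ne] at hw
  refine ⟨(f w - f z) / ε, div_pos (sub_pos.2 hfw) hε, fun x hx => ?_⟩
  set t := ε / dist x z
  have hd : 0 < dist x z := hε.trans_le hx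
  have ht : 0 < t := div_pos hε hd
  have ht1 : t ≤ 1 := (div_le_one hd).2 hx
  have hmem : AffineMap.lineMap z x t ∈ sphere z ε := by
    rw [mem_sphere, dist_lineMap_left, Real.norm_of_nonneg ht.le, dist_comm]
    exact div_mul_cancel₀ ε hd.ne'
  have hconv : f (AffineMap.lineMap z x t) ≤ (1 - t) * f z + t * f x := by
    simpa [AffineMap.lineMap_apply_module] using
      hf.convexOn.2 (mem_univ z) (mem_univ x) (sub_nonneg.2 ht1) ht.le (by ring)
  have hsecant : f w - f z ≤ t * (f x - f z) := by linarith [isMinOn_iff.1 hwmin _ hmem]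
  calc (f w - f z) / ε * dist x z = (f w - f z) / t := by
        rw [div_div_eq_mul_div, div_mul_eq_mul_div]
    _ ≤ f x - f z := (div_le_iff₀' ht).2 hsecant

theorem StrictConvexOn.tendsto_of_tendsto_fderiv {α : Type*} {l : Filter α} {y : α → E}
    (hf : StrictConvexOn ℝ univ f) (hdiff : Differentiable ℝ f) {z : E} (hz : IsMinOn f univ z)
    (hy : Tendsto (fun k => fderiv ℝ f (y k)) l (𝓝 0)) : Tendsto y l (𝓝 z) := by
  refine Metric.tendsto_nhds.2 fun ε hε => ?_
  obtain ⟨m, hm, hgrowth⟩ := hf.exists_pos_mul_dist_le_sub hdiff.continuous hz hε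
  filter_upwards [hy (ball_mem_nhds 0 hm)] with k hk
  rw [mem_preimage, mem_ball_zero_iff] at hk
  by_contra! hfar
  have hfirst := hf.convexOn.add_fderiv_le (mem_univ (y k)) (mem_univ z)
    (hdiff (y k)).hasFDerivAt
  have hdual : -fderiv ℝ f (y k) (z - y k) ≤ ‖fderiv ℝ f (y k)‖ * dist (y k) z := by
    rw [dist_comm, dist_eq_norm]
    exact (neg_le_abs _).trans ((fderiv ℝ f (y k)).le_opNorm _)
  have hpos : 0 < dist (y k) z := hε.trans_le hfar
  linarith [hgrowth (y k) hfar, mul_lt_mul_of_pos_right hk hpos]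

theorem tendsto_dist_minimizer_of_tendsto_fderiv {ι α : Type*} [Finite ι] {f : ι → E → ℝ}
    (hf : ∀ i, StrictConvexOn ℝ univ (f i)) (hdiff : ∀ i, Differentiable ℝ (f i)) {z : ι → E}
    (hz : ∀ i, IsMinOn (f i) univ (z i)) {σ : α → ι} {y : α → E} {l : Filter α}
    (hy : Tendsto (fun k => fderiv ℝ (f (σ k)) (y k)) l (𝓝 0)) :
    Tendsto (fun k => dist (y k) (z (σ k))) l (𝓝 0) := by
  have hpiece : ∀ i, Tendsto y (l ⊓ 𝓟 {k | σ k = i}) (𝓝 (z i)) := fun i =>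
    (hf i).tendsto_of_tendsto_fderiv (hdiff i) (hz i) <| (hy.mono_left inf_le_left).congr' <|
      eventually_inf_principal.2 <| Eventually.of_forall fun k hk => by rw [hk]
  refine Metric.tendsto_nhds.2 fun ε hε => ?_
  have hnear : ∀ i, ∀ᶠ k in l, σ k = i → dist (y k) (z i) < ε := fun i =>
    eventually_inf_principal.1 (hpiece i (ball_mem_nhds _ hε))
  filter_upwards [eventually_all.2 hnear] with k hk
  rw [Real.dist_eq, sub_zero, abs_dist]
  exact hk (σ k) rfl

end

section

variable {X ι : Type*} [MetricSpace X] [Finite ι]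

theorem exists_pos_forall_eq_of_dist_lt (z : ι → X) :
    ∃ ε > 0, ∀ i j, dist (z i) (z j) < ε → z i = z j := by
  have hpair : ∀ i j, ∀ᶠ ε in 𝓝[>] (0 : ℝ), dist (z i) (z j) < ε → z i = z j := by
    intro i j
    rcases eq_or_ne (z i) (z j) with hij | hij
    · exact Eventually.of_forall fun _ _ => hij
    · filter_upwards [Ioo_mem_nhdsGT (dist_pos.2 hij)] with ε hε hlt
      exact absurd hlt (not_lt.2 hε.2.le)
  simp only [← eventually_all] at hpair
  obtain ⟨ε, hε, hpos⟩ := (hpair.and self_mem_nhdsWithin).exists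
  exact ⟨ε, hpos, hε⟩

theorem exists_eventually_eq_of_tendsto_dist_succ (z : ι → X) (σ : ℕ → ι)
    (hstep : Tendsto (fun k => dist (z (σ (k + 1))) (z (σ k))) atTop (𝓝 0)) :
    ∃ j, ∀ᶠ k in atTop, z (σ k) = z j := by
  obtain ⟨ε, hε, hsep⟩ := exists_pos_forall_eq_of_dist_lt z
  obtain ⟨K, hK⟩ := eventually_atTop.1 (hstep.eventually_lt_const hε)
  refine ⟨σ K, eventually_atTop.2 ⟨K, fun k hk => ?_⟩⟩
  induction k, hk using Nat.le_induction with
  | base => rfl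
  | succ k hk ih => rw [hsep _ _ (hK k hk), ih]

theorem exists_tendsto_of_tendsto_dist_of_tendsto_dist_succ (z : ι → X) (σ : ℕ → ι) {p : ℕ → X}
    (hclose : Tendsto (fun k => dist (p k) (z (σ k))) atTop (𝓝 0))
    (hstep : Tendsto (fun k => dist (p (k + 1)) (p k)) atTop (𝓝 0)) :
    ∃ j, Tendsto p atTop (𝓝 (z j)) := by
  have hzstep : Tendsto (fun k => dist (z (σ (k + 1))) (z (σ k))) atTop (𝓝 0) := by
    have hsum := ((hclose.comp (tendsto_add_atTop_nat 1)).add hstep).add hclose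
    refine squeeze_zero (fun _ => dist_nonneg) (fun k => ?_) (by simpa using hsum)
    linarith [dist_triangle4_left (p (k + 1)) (p k) (z (σ (k + 1))) (z (σ k))]
  obtain ⟨j, hj⟩ := exists_eventually_eq_of_tendsto_dist_succ z σ hzstep
  exact ⟨j, tendsto_iff_dist_tendsto_zero.2 (hclose.congr' (hj.mono fun k hk => by rw [hk]))⟩

end

/-- if along a sequence with vanishing steps the gradient of the
currently active function (from a finite family of strictly convex `C¹` functions,
each attaining its global minimum) tends to zero, then the sequence converges and
its limit is the global minimizer of one of the functions of the family. -/
theorem finite_family_strictly_convex_vanishing_gradient_converges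
    (n N : ℕ) (h : Fin N → EuclideanSpace ℝ (Fin n) → ℝ)
    (hC1 : ∀ i, ContDiff ℝ 1 (h i))
    (hStrict : ∀ i, StrictConvexOn ℝ Set.univ (h i))
    (hMin : ∀ i, ∃ z, ∀ y, h i z ≤ h i y)
    (x : ℕ → EuclideanSpace ℝ (Fin n)) (σ : ℕ → Fin N)
    (hgrad : Tendsto (fun k => gradient (h (σ k)) (x k)) atTop (nhds 0))
    (hstep : Tendsto (fun k => ‖x (k+1) - x k‖) atTop (nhds 0)) :
    ∃ (xs : EuclideanSpace ℝ (Fin n)) (j : Fin N),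
      Tendsto x atTop (nhds xs) ∧ ∀ y, h j xs ≤ h j y := by
  choose z hz using hMin
  have hfderiv : Tendsto (fun k => fderiv ℝ (h (σ k)) (x k)) atTop (𝓝 0) := by
    simpa [Function.comp_def, toDual_gradient] using
      ((InnerProductSpace.toDual ℝ _).continuous.tendsto 0).comp hgrad
  have hclose := tendsto_dist_minimizer_of_tendsto_fderiv hStrict
    (fun i => (hC1 i).differentiable one_ne_zero) (fun i => isMinOn_univ_iff.2 (hz i)) hfderiv
  obtain ⟨j, hj⟩ := exists_tendsto_of_tendsto_dist_of_tendsto_dist_succ z σ hclose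
    (by simpa [dist_eq_norm] using hstep)
  exact ⟨z j, j, hj, hz j⟩
end

section
/- Fix ε > 0 and n agents with scalar states. Consider the homogeneous Hegselmann–Krause dynamics x_i^{k+1} = (x_i^k + ∑_{j ∈ N_i(x^k)} x_j^k) / (1 + |N_i(x^k)|) for i ∈ [n], where N_i(x) = {j ≠ i : |x_i − x_j| ≤ ε}. Then the function V(x) := ½ ∑_{i≠j} min{(x_i − x_j)²/2 − ε²/2, 0} satisfies V(x^{k+1}) ≤ V(x^k) − ‖x^{k+1} − x^k‖² for every k ≥ 0. -/
/-!
With `d = x^{k+1} - x^k`, the update says that `(1 + |Nᵢ|) dᵢ = ∑_{j ∈ Nᵢ} (xⱼ - xᵢ)`.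
Each summand `min {s²/2 - ε²/2, 0}` of `V` vanishes on non-neighbour pairs and, on neighbour
pairs, grows by at most `sᵢⱼ (dᵢ - dⱼ) + dᵢ² + dⱼ²` when `s` is replaced by `s + dᵢ - dⱼ`.
Since the neighbour relation is symmetric, the sum of these increments over all neighbour
pairs splits into two copies of `∑ᵢ ∑_{j ∈ Nᵢ} ((xᵢ - xⱼ) dᵢ + dᵢ²) = -∑ᵢ dᵢ²`.
-/

open Finset

lemma Finset.sum_sub_mul_add_sq_of_eq_average {ι : Type*} {s : Finset ι} {a : ι → ℝ} {c b : ℝ}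
    (hb : b = (c + ∑ j ∈ s, a j) / (1 + #s)) :
    ∑ j ∈ s, ((c - a j) * (b - c) + (b - c) ^ 2) = -(b - c) ^ 2 := by
  have hsum : ∑ j ∈ s, a j = (1 + #s) * b - c := by rw [hb]; field_simp; ring
  rw [sum_add_distrib, ← sum_mul, sum_sub_distrib, hsum, sum_const, sum_const, nsmul_eq_mul,
    nsmul_eq_mul]
  ring

lemma min_half_sq_sub_le_of_abs_le {ε s t : ℝ} (hs : |s| ≤ ε) :
    min (t ^ 2 / 2 - ε ^ 2 / 2) 0
      ≤ min (s ^ 2 / 2 - ε ^ 2 / 2) 0 + (t - s) ^ 2 / 2 + s * (t - s) := by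
  have hsε : s ^ 2 ≤ ε ^ 2 := sq_le_sq' (abs_le.mp hs).1 (abs_le.mp hs).2
  rw [min_eq_left (a := s ^ 2 / 2 - _) (by linarith)]
  linarith [min_le_left (t ^ 2 / 2 - ε ^ 2 / 2) 0]

lemma min_half_sq_sub_eq_zero_of_lt_abs {ε s : ℝ} (hε : 0 ≤ ε) (hs : ε < |s|) :
    min (s ^ 2 / 2 - ε ^ 2 / 2) 0 = 0 := by
  have : ε ^ 2 < s ^ 2 := by simpa only [sq_abs] using pow_lt_pow_left₀ hs hε two_ne_zero
  exact min_eq_right (by linarith)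

namespace HegselmannKrause

variable {ι : Type*} [Fintype ι] [DecidableEq ι]

noncomputable def neighbors (ε : ℝ) (a : ι → ℝ) (i : ι) : Finset ι :=
  univ.filter fun j => j ≠ i ∧ |a i - a j| ≤ ε

noncomputable def potential (ε : ℝ) (a : ι → ℝ) : ℝ :=
  (1 / 2) * ∑ i, ∑ j ∈ univ.filter (· ≠ i), min ((a i - a j) ^ 2 / 2 - ε ^ 2 / 2) 0

lemma mem_neighbors_comm {ε : ℝ} {a : ι → ℝ} {i j : ι} :
    j ∈ neighbors ε a i ↔ i ∈ neighbors ε a j := by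
  simp only [neighbors, mem_filter, mem_univ, true_and, ne_comm, abs_sub_comm]

lemma sum_sum_neighbors_comm (ε : ℝ) (a : ι → ℝ) (f : ι → ι → ℝ) :
    ∑ i, ∑ j ∈ neighbors ε a i, f j i = ∑ i, ∑ j ∈ neighbors ε a i, f i j :=
  sum_comm' fun _ _ => by simp only [mem_univ, true_and, and_true, mem_neighbors_comm]

lemma potential_add_le {ε : ℝ} (hε : 0 ≤ ε) (a d : ι → ℝ) :
    potential ε (a + d) ≤ potential ε a + (1 / 2) * ∑ i, ∑ j ∈ neighbors ε a i,
      ((a i - a j) * (d i - d j) + d i ^ 2 + d j ^ 2) := by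
  have hpair : ∀ i j, j ≠ i →
      min (((a + d) i - (a + d) j) ^ 2 / 2 - ε ^ 2 / 2) 0 ≤ min ((a i - a j) ^ 2 / 2 - ε ^ 2 / 2) 0
        + if j ∈ neighbors ε a i then (a i - a j) * (d i - d j) + d i ^ 2 + d j ^ 2 else 0 := by
    intro i j hji
    by_cases hj : j ∈ neighbors ε a i
    · have habs : |a i - a j| ≤ ε := (mem_filter.mp hj).2.2
      rw [if_pos hj]
      have := min_half_sq_sub_le_of_abs_le (t := (a + d) i - (a + d) j) habs
      simp only [Pi.add_apply] at this ⊢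
      nlinarith [sq_nonneg (d i + d j)]
    · have habs : ε < |a i - a j| := by simpa [neighbors, hji] using hj
      rw [if_neg hj, min_half_sq_sub_eq_zero_of_lt_abs hε habs, add_zero]
      exact min_le_right _ _
  have hsub : ∀ i, neighbors ε a i ⊆ univ.filter (· ≠ i) :=
    fun i j hj => mem_filter.mpr ⟨mem_univ j, (mem_filter.mp hj).2.1⟩
  calc potential ε (a + d)
      ≤ (1 / 2) * ∑ i, ∑ j ∈ univ.filter (· ≠ i), (min ((a i - a j) ^ 2 / 2 - ε ^ 2 / 2) 0
        + if j ∈ neighbors ε a i then (a i - a j) * (d i - d j) + d i ^ 2 + d j ^ 2 else 0) := by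
        unfold potential
        gcongr with i _ j hj
        exact hpair i j (mem_filter.mp hj).2
    _ = _ := by
        simp only [potential, sum_add_distrib, sum_ite_mem, inter_eq_right.mpr (hsub _)]
        ring

lemma potential_step_le {ε : ℝ} (hε : 0 ≤ ε) (a b : ι → ℝ)
    (hb : ∀ i, b i = (a i + ∑ j ∈ neighbors ε a i, a j) / (1 + #(neighbors ε a i))) :
    potential ε b ≤ potential ε a - ∑ i, (b i - a i) ^ 2 := by
  set d := b - a
  have hrow (i : ι) : ∑ j ∈ neighbors ε a i, ((a i - a j) * d i + d i ^ 2) = -d i ^ 2 :=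
    sum_sub_mul_add_sq_of_eq_average (hb i)
  have hpairs : ∑ i, ∑ j ∈ neighbors ε a i, ((a i - a j) * (d i - d j) + d i ^ 2 + d j ^ 2)
      = -2 * ∑ i, d i ^ 2 :=
    calc _ = ∑ i, ∑ j ∈ neighbors ε a i, ((a i - a j) * d i + d i ^ 2)
          + ∑ i, ∑ j ∈ neighbors ε a i, ((a j - a i) * d j + d j ^ 2) := by
          simp only [← sum_add_distrib]
          congr! 2
          ring
      _ = 2 * ∑ i, ∑ j ∈ neighbors ε a i, ((a i - a j) * d i + d i ^ 2) := by
          rw [sum_sum_neighbors_comm ε a fun i j => (a i - a j) * d i + d i ^ 2]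
          ring
      _ = -2 * ∑ i, d i ^ 2 := by simp only [hrow, sum_neg_distrib]; ring
  have := potential_add_le hε a d
  rw [add_sub_cancel, hpairs] at this
  simp only [d, Pi.sub_apply] at this ⊢
  linarith

end HegselmannKrause

/-- the homogeneous Hegselmann–Krause dynamics admit
`V(x) = ½ ∑_{i≠j} min{(xᵢ−xⱼ)²/2 − ε²/2, 0}` as a Lyapunov function with drift
`V(x^{k+1}) ≤ V(x^k) − ‖x^{k+1} − x^k‖²`. -/
theorem hegselmann_krause_lyapunov
    (n : ℕ) (ε : ℝ) (hε : 0 < ε)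
    (x : ℕ → EuclideanSpace ℝ (Fin n))
    (hdyn : ∀ k i, x (k+1) i =
      (x k i + ∑ j ∈ Finset.univ.filter (fun j => j ≠ i ∧ |x k i - x k j| ≤ ε), x k j) /
      (1 + ((Finset.univ.filter (fun j => j ≠ i ∧ |x k i - x k j| ≤ ε)).card : ℝ))) :
    ∀ k : ℕ,
      (1/2) * ∑ i, ∑ j ∈ Finset.univ.filter (fun j => j ≠ i),
          min ((x (k+1) i - x (k+1) j)^2 / 2 - ε^2 / 2) 0
      ≤ (1/2) * ∑ i, ∑ j ∈ Finset.univ.filter (fun j => j ≠ i),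
          min ((x k i - x k j)^2 / 2 - ε^2 / 2) 0
        - ‖x (k+1) - x k‖^2 := by
  intro k
  rw [EuclideanSpace.real_norm_sq_eq]
  exact HegselmannKrause.potential_step_le hε.le (x k).ofLp (x (k + 1)).ofLp (hdyn k)
end

section
/- Let W be a symmetric n×n matrix with nonnegative entries, row sums ∑_j W_ij = 1 for every i, and strictly positive diagonal entries W_ii > 0. Define V(x) := ½ ∑_{i≠j} W_ij (x_i − x_j)² (equivalently V(x) = xᵀ(I − W)x). Then for every x ∈ ℝⁿ, V(Wx) ≤ V(x) − 2 (min_i W_ii) ‖Wx − x‖²; in particular V is nonincreasing along the averaging dynamics x^{k+1} = W x^k and strictly decreasing whenever Wx^k ≠ x^k. -/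
/-!
With `w = W x` and `y = x − w`, symmetry and the unit row sums give the exact identity
`V(x) − V(w) = yᵀ(I + W)y = ½ ∑ᵢⱼ Wᵢⱼ (yᵢ + yⱼ)²`. Dropping the off-diagonal terms, which are
nonnegative, leaves `2 ∑ᵢ Wᵢᵢ yᵢ² ≥ 2 (minᵢ Wᵢᵢ) ‖y‖²`.
-/

open Finset Matrix

lemma sum_filter_ne_mul_sub_sq {ι R : Type*} [Fintype ι] [DecidableEq ι] [CommRing R]
    (W : Matrix ι ι R) (z : ι → R) :
    ∑ i, ∑ j ∈ univ.filter (fun j => j ≠ i), W i j * (z i - z j) ^ 2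
      = ∑ i, ∑ j, W i j * (z i - z j) ^ 2 :=
  sum_congr rfl fun i _ => by rw [filter_ne', sum_erase _ (by simp)]

lemma Matrix.IsSymm.sum_apply_eq_sum {ι R : Type*} [Fintype ι] [AddCommMonoid R]
    {W : Matrix ι ι R} (hsym : W.IsSymm) (j : ι) : ∑ i, W i j = ∑ i, W j i :=
  sum_congr rfl fun i _ => hsym.apply j i

lemma sum_sum_mul_mul_eq_dotProduct_mulVec {ι R : Type*} [Fintype ι] [CommRing R]
    (W : Matrix ι ι R) (z : ι → R) :
    ∑ i, ∑ j, W i j * (z i * z j) = z ⬝ᵥ W *ᵥ z := by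
  simp only [dotProduct, mulVec, mul_sum]
  exact sum_congr rfl fun i _ => sum_congr rfl fun j _ => by ring

section DoublyStochastic

variable {ι R : Type*} [Fintype ι] [CommRing R] {W : Matrix ι ι R}

lemma sum_sum_mul_sq_left (hrow : ∀ i, ∑ j, W i j = 1) (z : ι → R) :
    ∑ i, ∑ j, W i j * z i ^ 2 = z ⬝ᵥ z := by
  simp only [← sum_mul, hrow, one_mul, dotProduct, sq]

lemma sum_sum_mul_sq_right (hcol : ∀ j, ∑ i, W i j = 1) (z : ι → R) :
    ∑ i, ∑ j, W i j * z j ^ 2 = z ⬝ᵥ z := by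
  rw [sum_comm]
  simp only [← sum_mul, hcol, one_mul, dotProduct, sq]

lemma sum_sum_mul_sub_sq (hrow : ∀ i, ∑ j, W i j = 1) (hcol : ∀ j, ∑ i, W i j = 1)
    (z : ι → R) :
    ∑ i, ∑ j, W i j * (z i - z j) ^ 2 = 2 * (z ⬝ᵥ z - z ⬝ᵥ W *ᵥ z) := by
  have hexpand : ∑ i, ∑ j, W i j * (z i - z j) ^ 2
      = ∑ i, ∑ j, W i j * z i ^ 2 + ∑ i, ∑ j, W i j * z j ^ 2
        - 2 * ∑ i, ∑ j, W i j * (z i * z j) := by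
    simp only [mul_sum, ← sum_add_distrib, ← sum_sub_distrib]
    exact sum_congr rfl fun i _ => sum_congr rfl fun j _ => by ring
  rw [hexpand, sum_sum_mul_sq_left hrow, sum_sum_mul_sq_right hcol,
    sum_sum_mul_mul_eq_dotProduct_mulVec]
  ring

lemma sum_sum_mul_add_sq (hrow : ∀ i, ∑ j, W i j = 1) (hcol : ∀ j, ∑ i, W i j = 1)
    (z : ι → R) :
    ∑ i, ∑ j, W i j * (z i + z j) ^ 2 = 2 * (z ⬝ᵥ z + z ⬝ᵥ W *ᵥ z) := by
  have hexpand : ∑ i, ∑ j, W i j * (z i + z j) ^ 2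
      = ∑ i, ∑ j, W i j * z i ^ 2 + ∑ i, ∑ j, W i j * z j ^ 2
        + 2 * ∑ i, ∑ j, W i j * (z i * z j) := by
    simp only [mul_sum, ← sum_add_distrib]
    exact sum_congr rfl fun i _ => sum_congr rfl fun j _ => by ring
  rw [hexpand, sum_sum_mul_sq_left hrow, sum_sum_mul_sq_right hcol,
    sum_sum_mul_mul_eq_dotProduct_mulVec]
  ring

end DoublyStochastic

lemma Matrix.IsSymm.dotProduct_sub_dotProduct_mulVec_eq {ι R : Type*} [Fintype ι] [CommRing R]
    {W : Matrix ι ι R} (hsym : W.IsSymm) (x : ι → R) :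
    (x ⬝ᵥ x - x ⬝ᵥ W *ᵥ x) - (W *ᵥ x ⬝ᵥ W *ᵥ x - W *ᵥ x ⬝ᵥ W *ᵥ (W *ᵥ x))
      = (x - W *ᵥ x) ⬝ᵥ (x - W *ᵥ x) + (x - W *ᵥ x) ⬝ᵥ W *ᵥ (x - W *ᵥ x) := by
  have hadj : x ⬝ᵥ W *ᵥ (W *ᵥ x) = W *ᵥ x ⬝ᵥ W *ᵥ x := by
    rw [dotProduct_mulVec, ← mulVec_transpose, hsym.eq]
  simp only [mulVec_sub, sub_dotProduct, dotProduct_sub, dotProduct_comm (W *ᵥ x) x, hadj]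
  ring

lemma sum_diag_mul_sq_le_sum_sum_mul_add_sq {ι : Type*} [Fintype ι] {W : Matrix ι ι ℝ}
    (hnonneg : ∀ i j, 0 ≤ W i j) (z : ι → ℝ) :
    4 * ∑ i, W i i * z i ^ 2 ≤ ∑ i, ∑ j, W i j * (z i + z j) ^ 2 := by
  rw [mul_sum]
  refine sum_le_sum fun i _ => ?_
  calc 4 * (W i i * z i ^ 2) = W i i * (z i + z i) ^ 2 := by ring
    _ ≤ ∑ j, W i j * (z i + z j) ^ 2 :=
      single_le_sum (f := fun j => W i j * (z i + z j) ^ 2)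
        (fun j _ => mul_nonneg (hnonneg i j) (sq_nonneg _)) (mem_univ i)

lemma inf'_diag_mul_dotProduct_self_le {ι : Type*} [Fintype ι] (hι : (univ : Finset ι).Nonempty)
    (W : Matrix ι ι ℝ) (z : ι → ℝ) :
    (univ.inf' hι fun i => W i i) * (z ⬝ᵥ z) ≤ ∑ i, W i i * z i ^ 2 := by
  simp only [dotProduct, mul_sum, sq]
  exact sum_le_sum fun i _ =>
    mul_le_mul_of_nonneg_right (inf'_le _ (mem_univ i)) (mul_self_nonneg _)

/-- Laplacian Lyapunov function for symmetric averaging: for a symmetric,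
nonnegative, row-stochastic matrix `W` with positive diagonal,
`V(x) = ½ ∑_{i≠j} W_ij (xᵢ−xⱼ)²` decreases along `x ↦ Wx` by at least
`2 (minᵢ W_ii) ‖Wx − x‖²`, and strictly decreases whenever `Wx ≠ x`. -/
theorem symmetric_averaging_laplacian_lyapunov
    (n : ℕ) [NeZero n] (W : Matrix (Fin n) (Fin n) ℝ)
    (hsym : W.IsSymm) (hnonneg : ∀ i j, 0 ≤ W i j)
    (hrow : ∀ i, ∑ j, W i j = 1) (hdiag : ∀ i, 0 < W i i)
    (x : Fin n → ℝ) :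
    ((1/2) * ∑ i, ∑ j ∈ Finset.univ.filter (fun j => j ≠ i),
        W i j * (W.mulVec x i - W.mulVec x j)^2
      ≤ (1/2) * ∑ i, ∑ j ∈ Finset.univ.filter (fun j => j ≠ i), W i j * (x i - x j)^2
        - 2 * (Finset.univ.inf' Finset.univ_nonempty fun i => W i i)
          * ∑ i, (W.mulVec x i - x i)^2) ∧
    (W.mulVec x ≠ x →
      (1/2) * ∑ i, ∑ j ∈ Finset.univ.filter (fun j => j ≠ i),
          W i j * (W.mulVec x i - W.mulVec x j)^2
        < (1/2) * ∑ i, ∑ j ∈ Finset.univ.filter (fun j => j ≠ i), W i j * (x i - x j)^2) := by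
  have hcol : ∀ j, ∑ i, W i j = 1 := fun j => (hsym.sum_apply_eq_sum j).trans (hrow j)
  set α := univ.inf' univ_nonempty fun i => W i i
  set y := x - W *ᵥ x
  have hstep : ∑ i, ((W *ᵥ x) i - x i) ^ 2 = y ⬝ᵥ y := by
    simp only [y, dotProduct, Pi.sub_apply, ← sq]
    exact sum_congr rfl fun i _ => by ring
  have hdecrease : (1/2) * ∑ i, ∑ j, W i j * ((W *ᵥ x) i - (W *ᵥ x) j) ^ 2 + 2 * α * (y ⬝ᵥ y)
      ≤ (1/2) * ∑ i, ∑ j, W i j * (x i - x j) ^ 2 := by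
    have hgain := sum_diag_mul_sq_le_sum_sum_mul_add_sq hnonneg y
    rw [sum_sum_mul_add_sq hrow hcol] at hgain
    rw [sum_sum_mul_sub_sq hrow hcol, sum_sum_mul_sub_sq hrow hcol]
    linarith [hsym.dotProduct_sub_dotProduct_mulVec_eq x,
      inf'_diag_mul_dotProduct_self_le univ_nonempty W y]
  rw [sum_filter_ne_mul_sub_sq, sum_filter_ne_mul_sub_sq, hstep]
  refine ⟨by linarith, fun hne => ?_⟩
  have hα : 0 < α := (lt_inf'_iff _).2 fun i _ => hdiag i
  have hy : 0 < y ⬝ᵥ y := by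
    simpa only [star_trivial] using dotProduct_star_self_pos_iff.2 (sub_ne_zero.2 hne.symm)
  linarith [mul_pos hα hy]
end

section
/- Let m > 0 and n ≥ 1. Let Ψ: ℝⁿ → ℝ be twice continuously differentiable with ∇²Ψ(x) ⪰ 2mn·I for all x ∈ ℝⁿ (so Ψ is strictly convex), and let L: ℝⁿ → ℝ be twice continuously differentiable with all second-order partial derivatives bounded in absolute value by m. If x, x⁺ ∈ ℝⁿ satisfy the mirror-descent relation ∇Ψ(x⁺) = ∇Ψ(x) − ∇L(x), then L(x⁺) ≤ L(x). -/
/-!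
Put `v = x⁺ - x` and `c = m n ‖v‖²`. Bounding the entries of the Hessian of `L` by `m` bounds
its quadratic form by `c`, so Taylor's formula along the segment gives
`L x⁺ ≤ L x + DL(x) v + c / 2`. The mirror relation turns `-DL(x) v` into
`DΨ(x⁺) v - DΨ(x) v`, which is at least `2c` by the lower bound on the Hessian of `Ψ`.
Hence `L x⁺ ≤ L x - 3c / 2 ≤ L x`.
-/

open Set

section LineRestriction

variable {E : Type*} [NormedAddCommGroup E] [NormedSpace ℝ E] {f : E → ℝ} (x v : E)

theorem hasDerivAt_line (t : ℝ) : HasDerivAt (fun s : ℝ => x + s • v) v t := by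
  simpa using ((hasDerivAt_id t).smul_const v).const_add x

theorem hasDerivAt_comp_line_s9 (hf : Differentiable ℝ f) (t : ℝ) :
    HasDerivAt (fun s : ℝ => f (x + s • v)) (fderiv ℝ f (x + t • v) v) t :=
  (hf _).hasFDerivAt.comp_hasDerivAt t (hasDerivAt_line x v t)

theorem hasDerivAt_fderiv_comp_line (hf : ContDiff ℝ 2 f) (t : ℝ) :
    HasDerivAt (fun s : ℝ => fderiv ℝ f (x + s • v) v)
      (iteratedFDeriv ℝ 2 f (x + t • v) ![v, v]) t := by
  have hdf : Differentiable ℝ (fderiv ℝ f) :=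
    (hf.fderiv_right (by norm_num)).differentiable one_ne_zero
  rw [iteratedFDeriv_two_apply]
  exact ((ContinuousLinearMap.apply ℝ ℝ v).hasFDerivAt.comp _ (hdf _).hasFDerivAt).comp_hasDerivAt
    t (hasDerivAt_line x v t)

theorem le_fderiv_sub_fderiv_of_le_iteratedFDeriv (hf : ContDiff ℝ 2 f) {a : ℝ}
    (ha : ∀ t ∈ Ico (0 : ℝ) 1, a ≤ iteratedFDeriv ℝ 2 f (x + t • v) ![v, v]) :
    a ≤ fderiv ℝ f (x + v) v - fderiv ℝ f x v := by
  have hderiv := hasDerivAt_fderiv_comp_line x v hf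
  have key := image_le_of_deriv_right_le_deriv_boundary
    (f := fun t => fderiv ℝ f x v + a * t) (B := fun t => fderiv ℝ f (x + t • v) v)
    (by fun_prop) (fun t _ => (((hasDerivAt_id t).const_mul a).const_add _).hasDerivWithinAt)
    (by simp) (fun t _ => (hderiv t).continuousAt.continuousWithinAt)
    (fun t _ => (hderiv t).hasDerivWithinAt) (by simpa using ha) (right_mem_Icc.2 zero_le_one)
  simp only [mul_one, one_smul] at key
  linarith

theorem fderiv_comp_line_le_of_iteratedFDeriv_le (hf : ContDiff ℝ 2 f) {c : ℝ}
    (hc : ∀ t ∈ Ico (0 : ℝ) 1, iteratedFDeriv ℝ 2 f (x + t • v) ![v, v] ≤ c) :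
    ∀ t ∈ Icc (0 : ℝ) 1, fderiv ℝ f (x + t • v) v ≤ fderiv ℝ f x v + c * t := by
  have hderiv := hasDerivAt_fderiv_comp_line x v hf
  refine image_le_of_deriv_right_le_deriv_boundary
    (fun t _ => (hderiv t).continuousAt.continuousWithinAt)
    (fun t _ => (hderiv t).hasDerivWithinAt) (by simp) (by fun_prop)
    (fun t _ => (((hasDerivAt_id t).const_mul c).const_add _).hasDerivWithinAt) (by simpa using hc)

theorem le_add_fderiv_add_of_iteratedFDeriv_le (hf : ContDiff ℝ 2 f) {c : ℝ}
    (hc : ∀ t ∈ Ico (0 : ℝ) 1, iteratedFDeriv ℝ 2 f (x + t • v) ![v, v] ≤ c) :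
    f (x + v) ≤ f x + fderiv ℝ f x v + c / 2 := by
  have hderiv := hasDerivAt_comp_line_s9 x v (hf.differentiable two_ne_zero)
  have hB (t : ℝ) : HasDerivAt (fun s => f x + fderiv ℝ f x v * s + c / 2 * s ^ 2)
      (fderiv ℝ f x v + c * t) t := by
    refine ((((hasDerivAt_id t).const_mul _).const_add _).add
      ((hasDerivAt_pow 2 t).const_mul (c / 2))).congr_deriv ?_
    ring
  have key := image_le_of_deriv_right_le_deriv_boundary
    (fun t _ => (hderiv t).continuousAt.continuousWithinAt)
    (fun t _ => (hderiv t).hasDerivWithinAt) (by simp)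
    (fun t _ => (hB t).continuousAt.continuousWithinAt) (fun t _ => (hB t).hasDerivWithinAt)
    (fun t ht => fderiv_comp_line_le_of_iteratedFDeriv_le x v hf hc t (Ico_subset_Icc_self ht))
    (right_mem_Icc.2 zero_le_one)
  simpa using key

end LineRestriction

section EuclideanBilinear

variable {ι : Type*} [Fintype ι]

theorem EuclideanSpace.sq_sum_abs_le_card_mul_sq_norm (w : EuclideanSpace ℝ ι) :
    (∑ i, |w i|) ^ 2 ≤ Fintype.card ι * ‖w‖ ^ 2 := by
  rw [EuclideanSpace.norm_eq, Real.sq_sqrt (by positivity)]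
  simpa using sq_sum_le_card_mul_sum_sq (s := Finset.univ) (f := fun i => |w i|)

theorem EuclideanSpace.bilinear_apply_eq_sum [DecidableEq ι]
    (B : EuclideanSpace ℝ ι →L[ℝ] EuclideanSpace ℝ ι →L[ℝ] ℝ) (w : EuclideanSpace ℝ ι) :
    B w w = ∑ i, ∑ j, w i * w j * B (EuclideanSpace.single i 1) (EuclideanSpace.single j 1) := by
  have hw : w = ∑ i, w i • EuclideanSpace.single i (1 : ℝ) := by
    simpa using ((EuclideanSpace.basisFun ι ℝ).sum_repr w).symm
  conv_lhs => rw [hw]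
  simp only [map_sum, map_smul, sum_apply, smul_apply, smul_eq_mul, Finset.mul_sum]
  rw [Finset.sum_comm]
  exact Finset.sum_congr rfl fun i _ => Finset.sum_congr rfl fun j _ => by ring

theorem EuclideanSpace.bilinear_apply_self_le [DecidableEq ι] {m : ℝ} (hm : 0 ≤ m)
    (B : EuclideanSpace ℝ ι →L[ℝ] EuclideanSpace ℝ ι →L[ℝ] ℝ)
    (hB : ∀ i j, |B (EuclideanSpace.single i 1) (EuclideanSpace.single j 1)| ≤ m)
    (w : EuclideanSpace ℝ ι) :
    B w w ≤ m * Fintype.card ι * ‖w‖ ^ 2 :=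
  calc B w w ≤ ∑ i, ∑ j, |w i| * |w j| * m := by
        rw [EuclideanSpace.bilinear_apply_eq_sum]
        refine Finset.sum_le_sum fun i _ => Finset.sum_le_sum fun j _ => ?_
        refine (le_abs_self _).trans ?_
        rw [abs_mul, abs_mul]
        gcongr
        exact hB i j
    _ = m * (∑ i, |w i|) ^ 2 := by
        simp only [← Finset.mul_sum, ← Finset.sum_mul]
        ring
    _ ≤ m * (Fintype.card ι * ‖w‖ ^ 2) := by
        gcongr
        exact EuclideanSpace.sq_sum_abs_le_card_mul_sq_norm w
    _ = m * Fintype.card ι * ‖w‖ ^ 2 := by ring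

end EuclideanBilinear

theorem mirror_descent_step_decreases_general
    (n : ℕ) (m : ℝ) (hm : 0 < m)
    (Ψ L : EuclideanSpace ℝ (Fin n) → ℝ)
    (hΨ : ContDiff ℝ 2 Ψ)
    (hΨhess : ∀ (x v : EuclideanSpace ℝ (Fin n)),
      2 * m * (n : ℝ) * ‖v‖^2 ≤ iteratedFDeriv ℝ 2 Ψ x ![v, v])
    (hL : ContDiff ℝ 2 L)
    (hLhess : ∀ (x : EuclideanSpace ℝ (Fin n)) (i j : Fin n),
      |iteratedFDeriv ℝ 2 L x ![EuclideanSpace.single i (1:ℝ), EuclideanSpace.single j (1:ℝ)]| ≤ m)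
    (x xp : EuclideanSpace ℝ (Fin n))
    (hmirror : gradient Ψ xp = gradient Ψ x - gradient L x) :
    L xp ≤ L x := by
  set v := xp - x
  have hxp : x + v = xp := add_sub_cancel x xp
  set c := m * n * ‖v‖ ^ 2
  have hLhess_quad (y : EuclideanSpace ℝ (Fin n)) : iteratedFDeriv ℝ 2 L y ![v, v] ≤ c := by
    simpa [iteratedFDeriv_two_apply] using
      EuclideanSpace.bilinear_apply_self_le hm.le (fderiv ℝ (fderiv ℝ L) y)
        (fun i j => by simpa [iteratedFDeriv_two_apply] using hLhess y i j) v
  have hΨ_gap : 2 * c ≤ fderiv ℝ Ψ xp v - fderiv ℝ Ψ x v :=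
    hxp ▸ le_fderiv_sub_fderiv_of_le_iteratedFDeriv x v hΨ fun t _ => by
      linarith [hΨhess (x + t • v) v]
  have hΨ_gap_eq : fderiv ℝ Ψ xp v - fderiv ℝ Ψ x v = -fderiv ℝ L x v := by
    simp only [← InnerProductSpace.toDual_symm_apply (𝕜 := ℝ)]
    change inner ℝ (gradient Ψ xp) v - inner ℝ (gradient Ψ x) v = -inner ℝ (gradient L x) v
    rw [hmirror, inner_sub_left]
    ring
  have htaylor : L xp ≤ L x + fderiv ℝ L x v + c / 2 :=
    hxp ▸ le_add_fderiv_add_of_iteratedFDeriv_le x v hL fun t _ => hLhess_quad _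
  have hc : 0 ≤ c := by positivity
  linarith

/-- mirror-descent step: if `Ψ` is `C²` with `∇²Ψ ⪰ 2mn·I` and all
second-order partial derivatives of the `C²` function `L` are bounded by `m` in
absolute value, then the mirror-descent update `∇Ψ(x⁺) = ∇Ψ(x) − ∇L(x)` does not
increase `L`. -/
theorem mirror_descent_step_decreases
    (n : ℕ) (hn : 1 ≤ n) (m : ℝ) (hm : 0 < m)
    (Ψ L : EuclideanSpace ℝ (Fin n) → ℝ)
    (hΨ : ContDiff ℝ 2 Ψ)
    (hΨhess : ∀ (x v : EuclideanSpace ℝ (Fin n)),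
      2 * m * (n : ℝ) * ‖v‖^2 ≤ iteratedFDeriv ℝ 2 Ψ x ![v, v])
    (hL : ContDiff ℝ 2 L)
    (hLhess : ∀ (x : EuclideanSpace ℝ (Fin n)) (i j : Fin n),
      |iteratedFDeriv ℝ 2 L x ![EuclideanSpace.single i (1:ℝ), EuclideanSpace.single j (1:ℝ)]| ≤ m)
    (x xp : EuclideanSpace ℝ (Fin n))
    (hmirror : gradient Ψ xp = gradient Ψ x - gradient L x) :
    L xp ≤ L x :=
  mirror_descent_step_decreases_general n m hm Ψ L hΨ hΨhess hL hLhess x xp hmirror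
end

section
/- Let m > 0. For each ordered pair i ≠ j let g_ij: ℝ² → ℝ be twice continuously differentiable, bounded below, and symmetric (g_ij(a,b) = g_ji(b,a)), with all second-order partial derivatives bounded in absolute value by m; and let f_ij: ℝ → ℝ be continuously differentiable, nonnegative, strictly decreasing with f_ij'(λ) < 0 for all λ, and symmetric (f_ij = f_ji). Consider the dynamics x_i^{k+1} = x_i^k − [∑_{j≠i} f_ij(g_ij(x_i^k, x_j^k)) ∂g_ij/∂x_i (x_i^k, x_j^k)] / (1 + 2m ∑_{j≠i} f_ij(g_ij(x_i^k, x_j^k))), i ∈ [n]. Then the function V(x) := ∑_{i≠j} ∫₀^{g_ij(x_i,x_j)} f_ij(λ) dλ satisfies V(x^k) − V(x^{k+1}) ≥ ½ ‖x^k − x^{k+1}‖²_{Q_k} for every k, where Q_k is the diagonal matrix with entries [Q_k]_ii = 2 + 4m ∑_{j≠i} f_ij(g_ij(x_i^k, x_j^k)); consequently lim_{k→∞} ‖x^k − x^{k+1}‖_{Q_k} = 0. -/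
/-!
Since each `f_ij` is nonnegative and decreasing, `λ ↦ ∫₀^λ f_ij` is nondecreasing and concave, so
an edge term of `V` grows by at most `f_ij(g_ij(x^k))` times the growth of `g_ij`, and the bounded
second partials bound that growth by the first-order Taylor term plus `m(Δx_i² + Δx_j²)`. The
symmetry of `f` and `g` lets the edge `(i, j)` contribute its `x_i`-part to agent `i` and its
`x_j`-part to agent `j`. Summing over the edges, the update rule turns the first-order term of
agent `i` into `-2(1 + 2m F_i) Δx_i²`, where `F_i = ∑_{j≠i} f_ij(g_ij(x_i^k, x_j^k))`, and the
decrease follows. As `g` is bounded below and `f ≥ 0`, `V` is bounded below, so the decreasing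
sequence `V(x^k)` converges and its decrements, which dominate `½‖x^k − x^{k+1}‖²_{Q_k}`, tend
to `0`.
-/

open Filter Topology Finset

lemma abs_sub_le_mul_abs_sub_of_abs_deriv_le {φ : ℝ → ℝ} {m : ℝ} (hφ : Differentiable ℝ φ)
    (hb : ∀ t, |deriv φ t| ≤ m) (a b : ℝ) : |φ b - φ a| ≤ m * |b - a| :=
  Convex.norm_image_sub_le_of_norm_deriv_le (fun t _ => hφ t) (fun t _ => hb t) convex_univ
    (Set.mem_univ a) (Set.mem_univ b)

lemma le_add_deriv_mul_add_sq_of_abs_deriv_deriv_le {h : ℝ → ℝ} {m : ℝ} (hh : ContDiff ℝ 2 h)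
    (hb : ∀ t, |deriv (deriv h) t| ≤ m) (x y : ℝ) :
    h y ≤ h x + deriv h x * (y - x) + m / 2 * (y - x) ^ 2 := by
  have hd : Differentiable ℝ h := hh.differentiable two_ne_zero
  have hd2 : Differentiable ℝ (deriv h) := hh.differentiable_deriv_two
  -- `ψ` is convex because `ψ'' = m - h'' ≥ 0`, and `ψ'(x) = 0`, so `ψ` is minimal at `x`.
  set ψ : ℝ → ℝ := fun t => m / 2 * (t - x) ^ 2 - (h t - deriv h x * (t - x))
  set ψ' : ℝ → ℝ := fun t => m * (t - x) - (deriv h t - deriv h x)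
  have hψ : ∀ t, HasDerivAt ψ (ψ' t) t := fun t => by
    refine (((((hasDerivAt_id t).sub_const x).pow 2).const_mul (m / 2)).sub
      ((hd t).hasDerivAt.sub (((hasDerivAt_id t).sub_const x).const_mul _))).congr_deriv ?_
    show _ = m * (t - x) - (deriv h t - deriv h x)
    norm_num
    ring
  have hψ'_mono : Monotone ψ' := by
    refine monotone_of_deriv_nonneg (by fun_prop) fun t => ?_
    have : HasDerivAt ψ' (m * 1 - deriv (deriv h) t) t :=
      (((hasDerivAt_id t).sub_const x).const_mul m).sub ((hd2 t).hasDerivAt.sub_const _)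
    rw [this.deriv]
    linarith [(abs_le.mp (hb t)).2]
  have hconv : ConvexOn ℝ Set.univ ψ := by
    refine MonotoneOn.convexOn_of_deriv convex_univ
      (fun t _ => (hψ t).continuousAt.continuousWithinAt)
      (fun t _ => (hψ t).differentiableAt.differentiableWithinAt) ?_
    rw [show deriv ψ = ψ' from funext fun t => (hψ t).deriv]
    exact hψ'_mono.monotoneOn _
  have hmin : IsMinOn ψ Set.univ x := by
    refine hconv.isMinOn_of_rightDeriv_eq_zero (by simp) ?_
    rw [(hψ x).hasDerivWithinAt.derivWithin (uniqueDiffWithinAt_Ioi x)]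
    simp [ψ']
  have := hmin (Set.mem_univ y)
  simp only [Set.mem_ofPred_eq, ψ, sub_self] at this
  linarith

lemma differentiable_deriv_fst_of_contDiff_two {G : ℝ → ℝ → ℝ}
    (hG : ContDiff ℝ 2 (fun p : ℝ × ℝ => G p.1 p.2)) (a : ℝ) :
    Differentiable ℝ (fun s => deriv (fun t => G t s) a) := by
  set Gp : ℝ × ℝ → ℝ := fun p => G p.1 p.2
  have hGd : Differentiable ℝ Gp := hG.differentiable two_ne_zero
  have hpartial : (fun s => deriv (fun t => G t s) a) = fun s => fderiv ℝ Gp (a, s) (1, 0) :=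
    funext fun s => by
      have := (hGd (a, s)).hasFDerivAt.comp_hasDerivAt a
        ((hasDerivAt_id a).prodMk (hasDerivAt_const a s))
      exact this.deriv
  rw [hpartial]
  exact (((hG.fderiv_right (m := 1) (by norm_num)).differentiable one_ne_zero).comp
    ((differentiable_const a).prodMk differentiable_id)).clm_apply (differentiable_const _)

lemma sub_le_partials_mul_add_sq_of_abs_second_partials_le {G : ℝ → ℝ → ℝ} {m : ℝ} (hm : 0 ≤ m)
    (hG : ContDiff ℝ 2 (fun p : ℝ × ℝ => G p.1 p.2))
    (h11 : ∀ a b, |deriv (fun t => deriv (fun s => G s b) t) a| ≤ m)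
    (h21 : ∀ a b, |deriv (fun s => deriv (fun t => G t s) a) b| ≤ m)
    (h22 : ∀ a b, |deriv (fun s => deriv (fun t => G a t) s) b| ≤ m) (a b a' b' : ℝ) :
    G a' b' - G a b ≤ deriv (fun t => G t b) a * (a' - a) + deriv (fun t => G a t) b * (b' - b)
      + m * ((a' - a) ^ 2 + (b' - b) ^ 2) := by
  have step_fst : G a' b' ≤ G a b' + deriv (fun t => G t b') a * (a' - a) + m / 2 * (a' - a) ^ 2 :=
    le_add_deriv_mul_add_sq_of_abs_deriv_deriv_le
      (hG.comp (contDiff_id.prodMk contDiff_const)) (fun t => h11 t b') a a'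
  have step_snd : G a b' ≤ G a b + deriv (fun t => G a t) b * (b' - b) + m / 2 * (b' - b) ^ 2 :=
    le_add_deriv_mul_add_sq_of_abs_deriv_deriv_le
      (hG.comp (contDiff_const.prodMk contDiff_id)) (fun t => h22 a t) b b'
  have mixed : |deriv (fun t => G t b') a - deriv (fun t => G t b) a| ≤ m * |b' - b| :=
    abs_sub_le_mul_abs_sub_of_abs_deriv_le (differentiable_deriv_fst_of_contDiff_two hG a)
      (fun t => h21 a t) b b'
  have cross : (deriv (fun t => G t b') a - deriv (fun t => G t b) a) * (a' - a)
      ≤ m / 2 * ((a' - a) ^ 2 + (b' - b) ^ 2) :=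
    calc _ ≤ |deriv (fun t => G t b') a - deriv (fun t => G t b) a| * |a' - a| :=
          (le_abs_self _).trans (abs_mul _ _).le
      _ ≤ m * |b' - b| * |a' - a| := by gcongr
      _ ≤ m / 2 * ((a' - a) ^ 2 + (b' - b) ^ 2) := by
          nlinarith [two_mul_le_add_sq |b' - b| |a' - a|, sq_abs (b' - b), sq_abs (a' - a)]
  linarith

lemma Antitone.intervalIntegral_le_mul_sub {f : ℝ → ℝ} (hf : Continuous f) (hanti : Antitone f)
    (A B : ℝ) : ∫ t in A..B, f t ≤ f A * (B - A) := by
  rcases le_total A B with hAB | hBA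
  · calc ∫ t in A..B, f t ≤ ∫ _ in A..B, f A :=
          intervalIntegral.integral_mono_on hAB (hf.intervalIntegrable _ _)
            intervalIntegrable_const fun u hu => hanti hu.1
      _ = f A * (B - A) := by simp [mul_comm]
  · have : f A * (A - B) ≤ ∫ t in B..A, f t :=
      calc f A * (A - B) = ∫ _ in B..A, f A := by simp [mul_comm]
        _ ≤ ∫ t in B..A, f t := intervalIntegral.integral_mono_on hBA intervalIntegrable_const
            (hf.intervalIntegrable _ _) fun u hu => hanti hu.2
    rw [intervalIntegral.integral_symm]
    linarith

lemma integral_comp_sub_integral_comp_le {f : ℝ → ℝ} {G : ℝ → ℝ → ℝ} {m : ℝ} (hm : 0 ≤ m)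
    (hf : Continuous f) (hf_anti : Antitone f) (hf_nonneg : ∀ t, 0 ≤ f t)
    (hG : ContDiff ℝ 2 (fun p : ℝ × ℝ => G p.1 p.2))
    (h11 : ∀ a b, |deriv (fun t => deriv (fun s => G s b) t) a| ≤ m)
    (h21 : ∀ a b, |deriv (fun s => deriv (fun t => G t s) a) b| ≤ m)
    (h22 : ∀ a b, |deriv (fun s => deriv (fun t => G a t) s) b| ≤ m) (a b a' b' : ℝ) :
    (∫ t in (0 : ℝ)..G a' b', f t) - ∫ t in (0 : ℝ)..G a b, f t
      ≤ f (G a b) * (deriv (fun t => G t b) a * (a' - a) + deriv (fun t => G a t) b * (b' - b)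
        + m * ((a' - a) ^ 2 + (b' - b) ^ 2)) := by
  rw [intervalIntegral.integral_interval_sub_left (hf.intervalIntegrable _ _)
    (hf.intervalIntegrable _ _)]
  exact (hf_anti.intervalIntegral_le_mul_sub hf _ _).trans <| mul_le_mul_of_nonneg_left
    (sub_le_partials_mul_add_sq_of_abs_second_partials_le hm hG h11 h21 h22 a b a' b')
    (hf_nonneg _)

lemma monotone_intervalIntegral_of_nonneg {f : ℝ → ℝ} (hf : Continuous f) (hf_nonneg : ∀ t, 0 ≤ f t)
    (a : ℝ) : Monotone fun y => ∫ t in a..y, f t := fun y y' hyy' => by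
  rw [← sub_nonneg, intervalIntegral.integral_interval_sub_left (hf.intervalIntegrable _ _)
    (hf.intervalIntegrable _ _)]
  exact intervalIntegral.integral_nonneg hyy' fun t _ => hf_nonneg t

lemma tendsto_zero_of_nonneg_of_le_sub_succ {d V : ℕ → ℝ} (hd : ∀ k, 0 ≤ d k)
    (hdV : ∀ k, d k ≤ V k - V (k + 1)) (hV : BddBelow (Set.range V)) :
    Tendsto d atTop (𝓝 0) := by
  have hanti : Antitone V := antitone_nat_of_succ_le fun k => by linarith [hd k, hdV k]
  have hlim := tendsto_atTop_ciInf hanti hV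
  have hdecr : Tendsto (fun k => V k - V (k + 1)) atTop (𝓝 0) := by
    simpa using hlim.sub (hlim.comp (tendsto_add_atTop_nat 1))
  exact tendsto_of_tendsto_of_tendsto_of_le_of_le tendsto_const_nhds hdecr hd hdV

lemma sum_offDiag_add_swap {ι : Type*} [Fintype ι] [DecidableEq ι] (u : ι → ι → ℝ) :
    ∑ i, ∑ j ∈ univ.filter (fun j => j ≠ i), (u i j + u j i)
      = 2 * ∑ i, ∑ j ∈ univ.filter (fun j => j ≠ i), u i j := by
  have hswap : ∑ i, ∑ j ∈ univ.filter (fun j => j ≠ i), u j i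
      = ∑ i, ∑ j ∈ univ.filter (fun j => j ≠ i), u i j :=
    sum_comm' fun i j => by simp [ne_comm]
  simp only [sum_add_distrib]
  rw [hswap, two_mul]

noncomputable section Network

variable {n : ℕ}

def transferLoad (f : Fin n → Fin n → ℝ → ℝ) (g : Fin n → Fin n → ℝ → ℝ → ℝ) (x : Fin n → ℝ)
    (i : Fin n) : ℝ :=
  ∑ j ∈ univ.filter (fun j => j ≠ i), f i j (g i j (x i) (x j))

def transferGrad (f : Fin n → Fin n → ℝ → ℝ) (g : Fin n → Fin n → ℝ → ℝ → ℝ) (x : Fin n → ℝ)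
    (i : Fin n) : ℝ :=
  ∑ j ∈ univ.filter (fun j => j ≠ i),
    f i j (g i j (x i) (x j)) * deriv (fun t => g i j t (x j)) (x i)

def networkLyapunov (f : Fin n → Fin n → ℝ → ℝ) (g : Fin n → Fin n → ℝ → ℝ → ℝ)
    (x : Fin n → ℝ) : ℝ :=
  ∑ i, ∑ j ∈ univ.filter (fun j => j ≠ i), ∫ t in (0:ℝ)..(g i j (x i) (x j)), f i j t

/-- `‖x - y‖²_Q` for the diagonal matrix `Q` with `Q_ii = 2 + 4m F_i(x)`. -/
def transferSqDist (m : ℝ) (f : Fin n → Fin n → ℝ → ℝ) (g : Fin n → Fin n → ℝ → ℝ → ℝ)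
    (x y : Fin n → ℝ) : ℝ :=
  ∑ i, (2 + 4 * m * transferLoad f g x i) * (x i - y i) ^ 2

variable {m : ℝ} {f : Fin n → Fin n → ℝ → ℝ} {g : Fin n → Fin n → ℝ → ℝ → ℝ}

lemma transferLoad_nonneg (hf_nonneg : ∀ i j t, i ≠ j → 0 ≤ f i j t) (x : Fin n → ℝ) (i : Fin n) :
    0 ≤ transferLoad f g x i :=
  sum_nonneg fun j hj => hf_nonneg i j _ (Ne.symm (mem_filter.mp hj).2)

lemma transferSqDist_nonneg (hm : 0 ≤ m) (hf_nonneg : ∀ i j t, i ≠ j → 0 ≤ f i j t)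
    (x y : Fin n → ℝ) : 0 ≤ transferSqDist m f g x y :=
  sum_nonneg fun i _ => mul_nonneg
    (by linarith [mul_nonneg hm (transferLoad_nonneg (g := g) hf_nonneg x i)]) (sq_nonneg _)

lemma networkLyapunov_bddBelow
    (hg_bdd : ∀ i j, i ≠ j → BddBelow (Set.range (fun p : ℝ × ℝ => g i j p.1 p.2)))
    (hf_cont : ∀ i j, i ≠ j → Continuous (f i j)) (hf_nonneg : ∀ i j t, i ≠ j → 0 ≤ f i j t) :
    BddBelow (Set.range (networkLyapunov f g)) := by
  choose! c hc using fun i j (hij : i ≠ j) => (hg_bdd i j hij)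
  refine ⟨∑ i, ∑ j ∈ univ.filter (fun j => j ≠ i), ∫ t in (0:ℝ)..c i j, f i j t, ?_⟩
  rintro _ ⟨x, rfl⟩
  refine sum_le_sum fun i _ => sum_le_sum fun j hj => ?_
  have hij : i ≠ j := Ne.symm (mem_filter.mp hj).2
  exact monotone_intervalIntegral_of_nonneg (hf_cont i j hij) (fun t => hf_nonneg i j t hij) 0
    (hc i j hij ⟨(x i, x j), rfl⟩)

lemma networkLyapunov_sub_le (hm : 0 ≤ m)
    (hg_smooth : ∀ i j, i ≠ j → ContDiff ℝ 2 (fun p : ℝ × ℝ => g i j p.1 p.2))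
    (hg_symm : ∀ i j a b, i ≠ j → g i j a b = g j i b a)
    (hg11 : ∀ i j a b, i ≠ j → |deriv (fun t => deriv (fun s => g i j s b) t) a| ≤ m)
    (hg21 : ∀ i j a b, i ≠ j → |deriv (fun s => deriv (fun t => g i j t s) a) b| ≤ m)
    (hg22 : ∀ i j a b, i ≠ j → |deriv (fun s => deriv (fun t => g i j a t) s) b| ≤ m)
    (hf_cont : ∀ i j, i ≠ j → Continuous (f i j)) (hf_anti : ∀ i j, i ≠ j → Antitone (f i j))
    (hf_nonneg : ∀ i j t, i ≠ j → 0 ≤ f i j t) (hf_symm : ∀ i j t, i ≠ j → f i j t = f j i t)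
    (X Y : Fin n → ℝ) :
    networkLyapunov f g Y - networkLyapunov f g X
      ≤ 2 * ∑ i, (transferGrad f g X i * (Y i - X i)
        + m * transferLoad f g X i * (Y i - X i) ^ 2) := by
  set u : Fin n → Fin n → ℝ := fun i j => f i j (g i j (X i) (X j)) *
    (deriv (fun t => g i j t (X j)) (X i) * (Y i - X i) + m * (Y i - X i) ^ 2)
  -- By the symmetry of `f` and `g`, the `x_j`-part of the bound on edge `(i, j)` is `u j i`.
  have hedge : ∀ i j, i ≠ j → (∫ t in (0:ℝ)..g i j (Y i) (Y j), f i j t)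
      - (∫ t in (0:ℝ)..g i j (X i) (X j), f i j t) ≤ u i j + u j i := fun i j hij => by
    refine (integral_comp_sub_integral_comp_le hm (hf_cont i j hij) (hf_anti i j hij)
      (fun t => hf_nonneg i j t hij) (hg_smooth i j hij) (fun a b => hg11 i j a b hij)
      (fun a b => hg21 i j a b hij) (fun a b => hg22 i j a b hij) _ _ _ _).trans_eq ?_
    simp only [u, ← hg_symm i j _ _ hij, ← hf_symm i j _ hij]
    ring
  calc networkLyapunov f g Y - networkLyapunov f g X
      = ∑ i, ∑ j ∈ univ.filter (fun j => j ≠ i), ((∫ t in (0:ℝ)..g i j (Y i) (Y j), f i j t)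
          - ∫ t in (0:ℝ)..g i j (X i) (X j), f i j t) := by
        simp only [networkLyapunov, ← sum_sub_distrib]
    _ ≤ ∑ i, ∑ j ∈ univ.filter (fun j => j ≠ i), (u i j + u j i) :=
        sum_le_sum fun i _ => sum_le_sum fun j hj => hedge i j (Ne.symm (mem_filter.mp hj).2)
    _ = 2 * ∑ i, (transferGrad f g X i * (Y i - X i)
          + m * transferLoad f g X i * (Y i - X i) ^ 2) := by
        rw [sum_offDiag_add_swap]
        congr 1
        refine sum_congr rfl fun i _ => ?_
        simp only [u, transferGrad, transferLoad, sum_mul, mul_sum, ← sum_add_distrib]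
        exact sum_congr rfl fun j _ => by ring

lemma networkLyapunov_descent (hm : 0 ≤ m)
    (hg_smooth : ∀ i j, i ≠ j → ContDiff ℝ 2 (fun p : ℝ × ℝ => g i j p.1 p.2))
    (hg_symm : ∀ i j a b, i ≠ j → g i j a b = g j i b a)
    (hg11 : ∀ i j a b, i ≠ j → |deriv (fun t => deriv (fun s => g i j s b) t) a| ≤ m)
    (hg21 : ∀ i j a b, i ≠ j → |deriv (fun s => deriv (fun t => g i j t s) a) b| ≤ m)
    (hg22 : ∀ i j a b, i ≠ j → |deriv (fun s => deriv (fun t => g i j a t) s) b| ≤ m)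
    (hf_cont : ∀ i j, i ≠ j → Continuous (f i j)) (hf_anti : ∀ i j, i ≠ j → Antitone (f i j))
    (hf_nonneg : ∀ i j t, i ≠ j → 0 ≤ f i j t) (hf_symm : ∀ i j t, i ≠ j → f i j t = f j i t)
    {X Y : Fin n → ℝ}
    (hXY : ∀ i, Y i = X i - transferGrad f g X i / (1 + 2 * m * transferLoad f g X i)) :
    1 / 2 * transferSqDist m f g X Y ≤ networkLyapunov f g X - networkLyapunov f g Y := by
  have hstep : ∀ i, transferGrad f g X i * (Y i - X i)
      = -(1 + 2 * m * transferLoad f g X i) * (Y i - X i) ^ 2 := fun i => by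
    have hden : 0 < 1 + 2 * m * transferLoad f g X i := by
      linarith [mul_nonneg hm (transferLoad_nonneg (g := g) hf_nonneg X i)]
    rw [hXY i]
    field_simp
    ring
  have hsub := networkLyapunov_sub_le hm hg_smooth hg_symm hg11 hg21 hg22 hf_cont hf_anti
    hf_nonneg hf_symm X Y
  simp only [hstep] at hsub
  have hle : 1 / 2 * transferSqDist m f g X Y
      ≤ -(2 * ∑ i, (-(1 + 2 * m * transferLoad f g X i) * (Y i - X i) ^ 2
        + m * transferLoad f g X i * (Y i - X i) ^ 2)) := by
    simp only [transferSqDist, mul_sum, ← sum_neg_distrib]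
    exact sum_le_sum fun i _ => by nlinarith [sq_nonneg (Y i - X i)]
  linarith

end Network

theorem bcd_change_of_variables_lyapunov_general
    (n : ℕ) (m : ℝ) (hm : 0 < m)
    (f : Fin n → Fin n → ℝ → ℝ) (g : Fin n → Fin n → ℝ → ℝ → ℝ)
    (hgC : ∀ i j, i ≠ j → ContDiff ℝ 2 (fun p : ℝ × ℝ => g i j p.1 p.2))
    (hgB : ∀ i j, i ≠ j → BddBelow (Set.range (fun p : ℝ × ℝ => g i j p.1 p.2)))
    (hgsym : ∀ i j a b, i ≠ j → g i j a b = g j i b a)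
    (hg11 : ∀ i j a b, i ≠ j → |deriv (fun t => deriv (fun s => g i j s b) t) a| ≤ m)
    (hg21 : ∀ i j a b, i ≠ j → |deriv (fun s => deriv (fun t => g i j t s) a) b| ≤ m)
    (hg22 : ∀ i j a b, i ≠ j → |deriv (fun s => deriv (fun t => g i j a t) s) b| ≤ m)
    (hfC : ∀ i j, i ≠ j → ContDiff ℝ 1 (f i j))
    (hfnonneg : ∀ i j t, i ≠ j → 0 ≤ f i j t)
    (hfdec : ∀ i j t, i ≠ j → deriv (f i j) t < 0)
    (hfsym : ∀ i j t, i ≠ j → f i j t = f j i t)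
    (x : ℕ → Fin n → ℝ)
    (hdyn : ∀ k i, x (k + 1) i = x k i -
      (∑ j ∈ Finset.univ.filter (fun j => j ≠ i),
          f i j (g i j (x k i) (x k j)) * deriv (fun t => g i j t (x k j)) (x k i)) /
      (1 + 2 * m * ∑ j ∈ Finset.univ.filter (fun j => j ≠ i),
          f i j (g i j (x k i) (x k j)))) :
    (∀ k : ℕ,
      (1/2) * ∑ i, (2 + 4 * m * ∑ j ∈ Finset.univ.filter (fun j => j ≠ i),
            f i j (g i j (x k i) (x k j))) * (x k i - x (k+1) i)^2
      ≤ (∑ i, ∑ j ∈ Finset.univ.filter (fun j => j ≠ i),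
            ∫ t in (0:ℝ)..(g i j (x k i) (x k j)), f i j t)
        - ∑ i, ∑ j ∈ Finset.univ.filter (fun j => j ≠ i),
            ∫ t in (0:ℝ)..(g i j (x (k+1) i) (x (k+1) j)), f i j t) ∧
    Tendsto (fun k => Real.sqrt (∑ i,
        (2 + 4 * m * ∑ j ∈ Finset.univ.filter (fun j => j ≠ i),
          f i j (g i j (x k i) (x k j))) * (x k i - x (k+1) i)^2))
      atTop (nhds 0) := by
  have hf_cont : ∀ i j, i ≠ j → Continuous (f i j) := fun i j hij => (hfC i j hij).continuous
  have hf_anti : ∀ i j, i ≠ j → Antitone (f i j) := fun i j hij =>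
    (strictAnti_of_deriv_neg fun t => hfdec i j t hij).antitone
  have descent : ∀ k, 1 / 2 * transferSqDist m f g (x k) (x (k + 1))
      ≤ networkLyapunov f g (x k) - networkLyapunov f g (x (k + 1)) := fun k =>
    networkLyapunov_descent hm.le hgC hgsym hg11 hg21 hg22 hf_cont hf_anti hfnonneg hfsym (hdyn k)
  refine ⟨descent, ?_⟩
  have hhalf : Tendsto (fun k => 1 / 2 * transferSqDist m f g (x k) (x (k + 1))) atTop (𝓝 0) :=
    tendsto_zero_of_nonneg_of_le_sub_succ (V := fun k => networkLyapunov f g (x k))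
      (fun k => mul_nonneg (by norm_num) (transferSqDist_nonneg hm.le hfnonneg _ _)) descent
      ((networkLyapunov_bddBelow hgB hf_cont hfnonneg).mono
        (Set.range_comp_subset_range x (networkLyapunov f g)))
  show Tendsto (fun k => Real.sqrt (transferSqDist m f g (x k) (x (k + 1)))) atTop (𝓝 0)
  simpa [← mul_assoc] using (hhalf.const_mul 2).sqrt

/-- BCD with change of network variables: with nonnegative, strictly
decreasing, symmetric transfer functions `f_ij` and symmetric measurements `g_ij`,
the dynamics admit the Lyapunov function
`V(x) = ∑_{i≠j} ∫₀^{g_ij(xᵢ,xⱼ)} f_ij(λ) dλ` with drift at least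
`½‖x^k − x^{k+1}‖²_{Q_k}`, where `[Q_k]_ii = 2 + 4m ∑_{j≠i} f_ij(g_ij(xᵢᵏ,xⱼᵏ))`;
consequently `‖x^k − x^{k+1}‖_{Q_k} → 0`. -/
theorem bcd_change_of_variables_lyapunov
    (n : ℕ) (m : ℝ) (hm : 0 < m)
    (f : Fin n → Fin n → ℝ → ℝ) (g : Fin n → Fin n → ℝ → ℝ → ℝ)
    (hgC : ∀ i j, i ≠ j → ContDiff ℝ 2 (fun p : ℝ × ℝ => g i j p.1 p.2))
    (hgB : ∀ i j, i ≠ j → BddBelow (Set.range (fun p : ℝ × ℝ => g i j p.1 p.2)))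
    (hgsym : ∀ i j a b, i ≠ j → g i j a b = g j i b a)
    (hg11 : ∀ i j a b, i ≠ j → |deriv (fun t => deriv (fun s => g i j s b) t) a| ≤ m)
    (hg12 : ∀ i j a b, i ≠ j → |deriv (fun t => deriv (fun s => g i j t s) b) a| ≤ m)
    (hg21 : ∀ i j a b, i ≠ j → |deriv (fun s => deriv (fun t => g i j t s) a) b| ≤ m)
    (hg22 : ∀ i j a b, i ≠ j → |deriv (fun s => deriv (fun t => g i j a t) s) b| ≤ m)
    (hfC : ∀ i j, i ≠ j → ContDiff ℝ 1 (f i j))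
    (hfnonneg : ∀ i j t, i ≠ j → 0 ≤ f i j t)
    (hfdec : ∀ i j t, i ≠ j → deriv (f i j) t < 0)
    (hfsym : ∀ i j t, i ≠ j → f i j t = f j i t)
    (x : ℕ → Fin n → ℝ)
    (hdyn : ∀ k i, x (k + 1) i = x k i -
      (∑ j ∈ Finset.univ.filter (fun j => j ≠ i),
          f i j (g i j (x k i) (x k j)) * deriv (fun t => g i j t (x k j)) (x k i)) /
      (1 + 2 * m * ∑ j ∈ Finset.univ.filter (fun j => j ≠ i),
          f i j (g i j (x k i) (x k j)))) :
    (∀ k : ℕ,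
      (1/2) * ∑ i, (2 + 4 * m * ∑ j ∈ Finset.univ.filter (fun j => j ≠ i),
            f i j (g i j (x k i) (x k j))) * (x k i - x (k+1) i)^2
      ≤ (∑ i, ∑ j ∈ Finset.univ.filter (fun j => j ≠ i),
            ∫ t in (0:ℝ)..(g i j (x k i) (x k j)), f i j t)
        - ∑ i, ∑ j ∈ Finset.univ.filter (fun j => j ≠ i),
            ∫ t in (0:ℝ)..(g i j (x (k+1) i) (x (k+1) j)), f i j t) ∧
    Tendsto (fun k => Real.sqrt (∑ i,
        (2 + 4 * m * ∑ j ∈ Finset.univ.filter (fun j => j ≠ i),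
          f i j (g i j (x k i) (x k j))) * (x k i - x (k+1) i)^2))
      atTop (nhds 0) :=
  bcd_change_of_variables_lyapunov_general n m hm f g hgC hgB hgsym hg11 hg21 hg22 hfC hfnonneg
    hfdec hfsym x hdyn
end

section
/- For each i ∈ [n] let f_i: ℝ → ℝ be convex and differentiable, and for each ordered pair i ≠ j let g_ij: ℝ² → ℝ be convex, differentiable, and symmetric. Define Φ(x) := ∑_i f_i(x_i) + ½ ∑_{i≠j} max{g_ij(x_i,x_j), 0}, and suppose the set X of global minimizers of Φ is nonempty. Let x ∈ ℝⁿ, let g ∈ ℝⁿ have components g_i = f_i'(x_i) + ∑_{j ∈ N_i(x)} ∂g_ij/∂x_i (x_i, x_j), g ≠ 0, and let α ∈ [0, 2(Φ(x) − min Φ)/‖g‖²]. Then the point x⁺ = x − αg satisfies dist(x⁺, X) ≤ dist(x, X), where dist(y, X) = inf_{z ∈ X} ‖y − z‖. -/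
/-!
`gvec` is a subgradient of `Φ` at `x`. Each `f i` contributes its tangent-line inequality, and each
active hinge `max (g i j) 0` contributes the gradient of `g i j`; by the symmetry
`g i j a b = g j i b a` the `∂₂`-term of the pair `(i, j)` is the `∂₁`-term of `(j, i)`, and this
double counting is what the factor `1/2` in `Φ` absorbs. Hence `Φ x - min Φ ≤ ⟪gvec, x - z⟫` for
every minimizer `z`, and for the Polyak step size
`‖x - α gvec - z‖² = ‖x - z‖² - 2α⟪gvec, x - z⟫ + α²‖gvec‖² ≤ ‖x - z‖²`.
-/

open Finset
open scoped RealInnerProductSpace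

theorem ConvexOn.le_sub_of_hasFDerivAt {E : Type*} [NormedAddCommGroup E] [NormedSpace ℝ E]
    {G : E → ℝ} {G' : E →L[ℝ] ℝ} {p : E} (hG : ConvexOn ℝ Set.univ G) (hG' : HasFDerivAt G G' p)
    (q : E) : G' (q - p) ≤ G q - G p := by
  have hline : HasDerivAt (G ∘ AffineMap.lineMap (k := ℝ) p q) (G' (q - p)) 0 := by
    refine hG'.comp_hasDerivAt_of_eq (0 : ℝ) AffineMap.hasDerivAt_lineMap ?_
    simp
  simpa [slope_def_field] using
    (hG.comp_affineMap (AffineMap.lineMap p q)).le_slope_of_hasDerivAt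
      (Set.mem_univ 0) (Set.mem_univ 1) zero_lt_one hline

theorem ConvexOn.deriv_mul_sub_le {f : ℝ → ℝ} {a : ℝ} (hf : ConvexOn ℝ Set.univ f)
    (hfd : DifferentiableAt ℝ f a) (b : ℝ) : deriv f a * (b - a) ≤ f b - f a := by
  simpa [mul_comm] using hf.le_sub_of_hasFDerivAt hfd.hasDerivAt.hasFDerivAt b

theorem ConvexOn.partialDeriv_mul_sub_add_le {G : ℝ → ℝ → ℝ} {a b : ℝ}
    (hG : ConvexOn ℝ Set.univ fun p : ℝ × ℝ => G p.1 p.2)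
    (hGd : DifferentiableAt ℝ (fun p : ℝ × ℝ => G p.1 p.2) (a, b)) (c d : ℝ) :
    deriv (fun t => G t b) a * (c - a) + deriv (fun t => G a t) b * (d - b) ≤ G c d - G a b := by
  set G' := fderiv ℝ (fun p : ℝ × ℝ => G p.1 p.2) (a, b)
  have h₁ : HasDerivAt (fun t => G t b) (G' (1, 0)) a :=
    hGd.hasFDerivAt.comp_hasDerivAt (f := fun t => (t, b)) a
      ((hasDerivAt_id a).prodMk (hasDerivAt_const a b))
  have h₂ : HasDerivAt (fun t => G a t) (G' (0, 1)) b :=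
    hGd.hasFDerivAt.comp_hasDerivAt (f := fun t => (a, t)) b
      ((hasDerivAt_const b a).prodMk (hasDerivAt_id b))
  have hsplit : ((c, d) - (a, b) : ℝ × ℝ) = (c - a) • (1, 0) + (d - b) • (0, 1) := by
    ext <;> simp
  have := hG.le_sub_of_hasFDerivAt hGd.hasFDerivAt (c, d)
  rw [hsplit, map_add, map_smul, map_smul] at this
  simpa [h₁.deriv, h₂.deriv, mul_comm] using this

theorem ConvexOn.ite_partialDeriv_mul_sub_add_le_max_sub {G : ℝ → ℝ → ℝ} {a b : ℝ}
    (hG : ConvexOn ℝ Set.univ fun p : ℝ × ℝ => G p.1 p.2)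
    (hGd : DifferentiableAt ℝ (fun p : ℝ × ℝ => G p.1 p.2) (a, b)) (c d : ℝ) :
    ((if 0 < G a b then deriv (fun t => G t b) a * (c - a) else 0) +
      if 0 < G a b then deriv (fun t => G a t) b * (d - b) else 0) ≤
      max (G c d) 0 - max (G a b) 0 := by
  split_ifs with hpos
  · rw [max_eq_left hpos.le]
    linarith [hG.partialDeriv_mul_sub_add_le hGd c d, le_max_left (G c d) 0]
  · rw [max_eq_right (not_lt.1 hpos)]
    simp

theorem Finset.sum_sum_ne_le_half_of_add_swap_le {ι : Type*} [Fintype ι] [DecidableEq ι]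
    {A D : ι → ι → ℝ} (h : ∀ i j, i ≠ j → A i j + A j i ≤ D i j) :
    ∑ i, ∑ j ∈ univ.filter (· ≠ i), A i j ≤ (1 / 2) * ∑ i, ∑ j ∈ univ.filter (· ≠ i), D i j := by
  have hswap : ∑ i, ∑ j ∈ univ.filter (· ≠ i), A j i = ∑ i, ∑ j ∈ univ.filter (· ≠ i), A i j := by
    simp only [sum_filter]
    rw [sum_comm]
    simp only [ne_comm]
  have hpairs : ∑ i, ∑ j ∈ univ.filter (· ≠ i), (A i j + A j i) ≤
      ∑ i, ∑ j ∈ univ.filter (· ≠ i), D i j :=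
    sum_le_sum fun i _ => sum_le_sum fun j hj => h i j (mem_filter.1 hj).2.symm
  simp only [sum_add_distrib, hswap] at hpairs
  linarith

theorem norm_sub_smul_sub_le_of_le_inner {E : Type*} [NormedAddCommGroup E]
    [InnerProductSpace ℝ E] {v x y : E} {c α : ℝ} (hc : c ≤ ⟪v, x - y⟫) (hα₀ : 0 ≤ α)
    (hα : α ≤ 2 * c / ‖v‖ ^ 2) : ‖x - α • v - y‖ ≤ ‖x - y‖ := by
  rcases eq_or_ne v 0 with rfl | hv
  · simp
  have hα' : α * ‖v‖ ^ 2 ≤ 2 * c := (le_div_iff₀ (by positivity)).1 hα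
  have hsq : ‖x - α • v - y‖ ^ 2 ≤ ‖x - y‖ ^ 2 :=
    calc ‖x - α • v - y‖ ^ 2 = ‖x - y‖ ^ 2 - 2 * α * ⟪v, x - y⟫ + α * (α * ‖v‖ ^ 2) := by
          rw [show x - α • v - y = (x - y) - α • v by abel, norm_sub_sq_real, inner_smul_right,
            real_inner_comm, norm_smul, Real.norm_eq_abs, mul_pow, sq_abs]
          ring
      _ ≤ ‖x - y‖ ^ 2 := by nlinarith
  exact (pow_le_pow_iff_left₀ (norm_nonneg _) (norm_nonneg _) two_ne_zero).1 hsq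

theorem Metric.infDist_le_infDist_of_forall_dist_le {α : Type*} [PseudoMetricSpace α]
    {x y : α} {s : Set α} (h : ∀ z ∈ s, dist y z ≤ dist x z) : infDist y s ≤ infDist x s := by
  rcases s.eq_empty_or_nonempty with rfl | hs
  · simp
  exact (le_infDist hs).2 fun z hz => (infDist_le_dist_of_mem hz).trans (h z hz)

noncomputable section PenaltyObjective

variable {ι : Type*} [Fintype ι] [DecidableEq ι]

def penaltyObjective (f : ι → ℝ → ℝ) (g : ι → ι → ℝ → ℝ → ℝ) (z : ι → ℝ) : ℝ :=
  ∑ i, f i (z i) + (1 / 2) * ∑ i, ∑ j ∈ univ.filter (fun j => j ≠ i), max (g i j (z i) (z j)) 0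

def penaltySubgradient (f : ι → ℝ → ℝ) (g : ι → ι → ℝ → ℝ → ℝ) (x : ι → ℝ) (i : ι) : ℝ :=
  deriv (f i) (x i) + ∑ j ∈ univ.filter (fun j => j ≠ i ∧ 0 < g i j (x i) (x j)),
    deriv (fun t => g i j t (x j)) (x i)

theorem sum_penaltySubgradient_mul_sub_le {f : ι → ℝ → ℝ} {g : ι → ι → ℝ → ℝ → ℝ}
    (hfc : ∀ i, ConvexOn ℝ Set.univ (f i)) (hfd : ∀ i, Differentiable ℝ (f i))
    (hgc : ∀ i j, i ≠ j → ConvexOn ℝ Set.univ (fun p : ℝ × ℝ => g i j p.1 p.2))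
    (hgd : ∀ i j, i ≠ j → Differentiable ℝ (fun p : ℝ × ℝ => g i j p.1 p.2))
    (hsym : ∀ i j a b, i ≠ j → g i j a b = g j i b a) (x z : ι → ℝ) :
    ∑ i, penaltySubgradient f g x i * (z i - x i) ≤
      penaltyObjective f g z - penaltyObjective f g x := by
  set A : ι → ι → ℝ := fun i j =>
    if 0 < g i j (x i) (x j) then deriv (fun t => g i j t (x j)) (x i) * (z i - x i) else 0
  have hsplit : ∑ i, penaltySubgradient f g x i * (z i - x i) =
      ∑ i, deriv (f i) (x i) * (z i - x i) + ∑ i, ∑ j ∈ univ.filter (· ≠ i), A i j := by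
    rw [← sum_add_distrib]
    refine sum_congr rfl fun i _ => ?_
    simp only [penaltySubgradient, A, add_mul, sum_mul, sum_filter, ite_and, ite_mul, zero_mul]
  have hf : ∑ i, deriv (f i) (x i) * (z i - x i) ≤ ∑ i, (f i (z i) - f i (x i)) :=
    sum_le_sum fun i _ => (hfc i).deriv_mul_sub_le (hfd i _) _
  have hpair : ∀ i j, i ≠ j → A i j + A j i ≤
      max (g i j (z i) (z j)) 0 - max (g i j (x i) (x j)) 0 := by
    intro i j hij
    simp only [A, ← hsym i j _ _ hij]
    exact (hgc i j hij).ite_partialDeriv_mul_sub_add_le_max_sub (hgd i j hij _) _ _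
  have hg := sum_sum_ne_le_half_of_add_swap_le hpair
  simp only [penaltyObjective, sum_sub_distrib] at hf hg ⊢
  linarith

end PenaltyObjective

theorem subgradient_step_nonexpansive_to_optimal_set_general
    (n : ℕ) (f : Fin n → ℝ → ℝ) (g : Fin n → Fin n → ℝ → ℝ → ℝ)
    (hfc : ∀ i, ConvexOn ℝ Set.univ (f i)) (hfd : ∀ i, Differentiable ℝ (f i))
    (hgc : ∀ i j, i ≠ j → ConvexOn ℝ Set.univ (fun p : ℝ × ℝ => g i j p.1 p.2))
    (hgd : ∀ i j, i ≠ j → Differentiable ℝ (fun p : ℝ × ℝ => g i j p.1 p.2))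
    (hsym : ∀ i j a b, i ≠ j → g i j a b = g j i b a)
    (Φ : EuclideanSpace ℝ (Fin n) → ℝ)
    (hΦ : ∀ z : EuclideanSpace ℝ (Fin n), Φ z = ∑ i, f i (z i) +
      (1/2) * ∑ i, ∑ j ∈ Finset.univ.filter (fun j => j ≠ i), max (g i j (z i) (z j)) 0)
    (X : Set (EuclideanSpace ℝ (Fin n)))
    (hX : X = {z : EuclideanSpace ℝ (Fin n) | ∀ y, Φ z ≤ Φ y})
    (x gvec : EuclideanSpace ℝ (Fin n))
    (hgvec : ∀ i, gvec i = deriv (f i) (x i) +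
      ∑ j ∈ Finset.univ.filter (fun j => j ≠ i ∧ 0 < g i j (x i) (x j)),
        deriv (fun t => g i j t (x j)) (x i))
    (xstar : EuclideanSpace ℝ (Fin n))
    (α : ℝ) (hα0 : 0 ≤ α) (hα1 : α ≤ 2 * (Φ x - Φ xstar) / ‖gvec‖^2) :
    Metric.infDist (x - α • gvec) X ≤ Metric.infDist x X := by
  refine Metric.infDist_le_infDist_of_forall_dist_le fun z hz => ?_
  rw [dist_eq_norm, dist_eq_norm]
  refine norm_sub_smul_sub_le_of_le_inner ?_ hα0 hα1
  have hzmin : Φ z ≤ Φ xstar := by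
    rw [hX] at hz
    exact hz xstar
  have hinner : ⟪gvec, z - x⟫ = ∑ i, penaltySubgradient f g x.ofLp i * (z i - x i) := by
    simp [PiLp.inner_apply, hgvec, penaltySubgradient, mul_comm]
  have hsub : ⟪gvec, z - x⟫ ≤ Φ z - Φ x := by
    rw [hinner, hΦ z, hΦ x]
    exact sum_penaltySubgradient_mul_sub_le hfc hfd hgc hgd hsym x.ofLp z.ofLp
  rw [← neg_sub z x, inner_neg_right]
  linarith

/-- subgradient step does not increase distance to the optimal set:
with `X` the (nonempty) set of global minimizers of `Φ` and
`α ∈ [0, 2(Φ(x) − min Φ)/‖g‖²]`, the update `x⁺ = x − αg` satisfies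
`dist(x⁺, X) ≤ dist(x, X)`. -/
theorem subgradient_step_nonexpansive_to_optimal_set
    (n : ℕ) (f : Fin n → ℝ → ℝ) (g : Fin n → Fin n → ℝ → ℝ → ℝ)
    (hfc : ∀ i, ConvexOn ℝ Set.univ (f i)) (hfd : ∀ i, Differentiable ℝ (f i))
    (hgc : ∀ i j, i ≠ j → ConvexOn ℝ Set.univ (fun p : ℝ × ℝ => g i j p.1 p.2))
    (hgd : ∀ i j, i ≠ j → Differentiable ℝ (fun p : ℝ × ℝ => g i j p.1 p.2))
    (hsym : ∀ i j a b, i ≠ j → g i j a b = g j i b a)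
    (Φ : EuclideanSpace ℝ (Fin n) → ℝ)
    (hΦ : ∀ z : EuclideanSpace ℝ (Fin n), Φ z = ∑ i, f i (z i) +
      (1/2) * ∑ i, ∑ j ∈ Finset.univ.filter (fun j => j ≠ i), max (g i j (z i) (z j)) 0)
    (X : Set (EuclideanSpace ℝ (Fin n)))
    (hX : X = {z : EuclideanSpace ℝ (Fin n) | ∀ y, Φ z ≤ Φ y})
    (hXne : X.Nonempty)
    (x gvec : EuclideanSpace ℝ (Fin n))
    (hgvec : ∀ i, gvec i = deriv (f i) (x i) +
      ∑ j ∈ Finset.univ.filter (fun j => j ≠ i ∧ 0 < g i j (x i) (x j)),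
        deriv (fun t => g i j t (x j)) (x i))
    (hgnz : gvec ≠ 0)
    (xstar : EuclideanSpace ℝ (Fin n)) (hxstar : xstar ∈ X)
    (α : ℝ) (hα0 : 0 ≤ α) (hα1 : α ≤ 2 * (Φ x - Φ xstar) / ‖gvec‖^2) :
    Metric.infDist (x - α • gvec) X ≤ Metric.infDist x X :=
  subgradient_step_nonexpansive_to_optimal_set_general n f g hfc hfd hgc hgd hsym Φ hΦ X hX x gvec
    hgvec xstar α hα0 hα1
end
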